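/- arXiv:math/0702072 — 3 statements merged into one kernel-verified Lean document; each statement's English description precedes it below -/
import Mathlib

section
/- Let a, d ∈ L^∞(0,1), r₀, r₁ ∈ ℂ with |r₀r₁| ≠ exp(∫₀¹(Re a + Re d)), ω > 0. Then there is a constant C > 0, independent of k ∈ ℤ, such that for all k ∈ ℤ and all f_k, g_k ∈ L²(0,1), the functions u_k, v_k given by the explicit solution formulas satisfy sup_{x∈[0,1]} (|u_k(x)| + |v_k(x)|) ≤ C (‖f_k‖_{L²(0,1)} + ‖g_k‖_{L²(0,1)}). -/
open MeasureTheory Complex Filter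


open MeasureTheory Complex Filter
set_option maxHeartbeats 1000000

noncomputable def μ0 : Measure ℝ := volume.restrict (Set.Ioo 0 1)

/-- `α(x) = ∫₀ˣ a(y) dy` (also used as `δ` with `a` replaced by `d`). -/
noncomputable def pInt (a : ℝ → ℂ) (x : ℝ) : ℂ := ∫ y in (0:ℝ)..x, a y

/-- `Δ_k = e^{ikω+δ(1)} − r₀r₁ e^{−ikω−α(1)}`. -/
noncomputable def Δk (a d : ℝ → ℂ) (r₀ r₁ : ℂ) (ω : ℝ) (k : ℤ) : ℂ :=
  Complex.exp (((k : ℝ) * ω : ℝ) * Complex.I + pInt d 1) -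
    r₀ * r₁ * Complex.exp (-(((k : ℝ) * ω : ℝ) * Complex.I) - pInt a 1)

/-- `w_k(f_k,g_k)`. -/
noncomputable def wk (a d : ℝ → ℂ) (r₁ : ℂ) (ω : ℝ) (k : ℤ) (f g : ℝ → ℂ) : ℂ :=
  r₁ * Complex.exp (-(((k : ℝ) * ω : ℝ) * Complex.I) - pInt a 1) *
      ∫ y in (0:ℝ)..1, Complex.exp (((k : ℝ) * ω * y : ℝ) * Complex.I + pInt a y) * f y -
    Complex.exp (((k : ℝ) * ω : ℝ) * Complex.I + pInt d 1) *
      ∫ y in (0:ℝ)..1, Complex.exp (-(((k : ℝ) * ω * y : ℝ) * Complex.I) - pInt d y) * g y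

/-- The explicit solution `u_k`. -/
noncomputable def uSol (a d : ℝ → ℂ) (r₀ r₁ : ℂ) (ω : ℝ) (k : ℤ) (f g : ℝ → ℂ) (x : ℝ) : ℂ :=
  Complex.exp (-(((k : ℝ) * ω * x : ℝ) * Complex.I) - pInt a x) *
    ((∫ y in (0:ℝ)..x, Complex.exp (((k : ℝ) * ω * y : ℝ) * Complex.I + pInt a y) * f y) +
      (r₀ / Δk a d r₀ r₁ ω k) * wk a d r₁ ω k f g)

/-- The explicit solution `v_k`. -/
noncomputable def vSol (a d : ℝ → ℂ) (r₀ r₁ : ℂ) (ω : ℝ) (k : ℤ) (f g : ℝ → ℂ) (x : ℝ) : ℂ :=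
  Complex.exp ((((k : ℝ) * ω * x : ℝ)) * Complex.I + pInt d x) *
    ((∫ y in (0:ℝ)..x, Complex.exp (-(((k : ℝ) * ω * y : ℝ) * Complex.I) - pInt d y) * g y) +
      (1 / Δk a d r₀ r₁ ω k) * wk a d r₁ ω k f g)

instance : IsProbabilityMeasure μ0 := by
  constructor
  simp [μ0, Real.volume_Ioo]

lemma l_int {a : ℝ → ℂ} {p : ENNReal} (hp : 1 ≤ p) (ha : MemLp a p μ0) :
    IntegrableOn a (Set.Ioo 0 1) volume := by
  have : Integrable a μ0 := ha.integrable hp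
  simpa [μ0, IntegrableOn] using this

lemma l_ii {F : ℝ → ℂ} (hI : IntegrableOn F (Set.Ioo 0 1) volume) {x : ℝ}
    (hx : x ∈ Set.Icc (0:ℝ) 1) : IntervalIntegrable F volume 0 x := by
  rw [intervalIntegrable_iff_integrableOn_Ioc_of_le hx.1]
  have h1 : IntegrableOn F (Set.Ioo 0 x) volume :=
    hI.mono_set (Set.Ioo_subset_Ioo le_rfl hx.2)
  exact h1.congr_set_ae Ioo_ae_eq_Ioc.symm

lemma l_cont {a : ℝ → ℂ} (hI : IntegrableOn a (Set.Ioo 0 1) volume) :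
    ContinuousOn (pInt a) (Set.Icc 0 1) := by
  have hIcc : IntegrableOn a (Set.Icc 0 1) volume :=
    hI.congr_set_ae Ioo_ae_eq_Icc.symm
  have := intervalIntegral.continuousOn_primitive (f := a) (a := (0:ℝ)) (b := 1)
    (μ := volume) hIcc
  have heq : ∀ x ∈ Set.Icc (0:ℝ) 1, (∫ t in Set.Ioc 0 x, a t) = pInt a x := by
    intro x hx
    rw [pInt, intervalIntegral.integral_of_le hx.1]
  exact ContinuousOn.congr this fun x hx => (heq x hx).symm

lemma l_abs_exp_le {z : ℂ} {M : ℝ} (h : z.re ≤ M) :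
    ‖Complex.exp z‖ ≤ Real.exp M := by
  rw [Complex.norm_exp]; exact Real.exp_le_exp.mpr h

lemma l_pInt_bound {a : ℝ → ℂ} (hI : IntegrableOn a (Set.Ioo 0 1) volume) {x : ℝ}
    (hx : x ∈ Set.Icc (0:ℝ) 1) :
    ‖pInt a x‖ ≤ ∫ y in Set.Ioo (0:ℝ) 1, ‖a y‖ := by
  have h1 : ‖pInt a x‖ ≤ ∫ y in Set.Ioc (0:ℝ) x, ‖a y‖ := by
    have := intervalIntegral.norm_integral_le_integral_norm_uIoc (f := a) (a := (0:ℝ))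
      (b := x) (μ := volume)
    rwa [Set.uIoc_of_le hx.1] at this
  have h2 : (∫ y in Set.Ioc (0:ℝ) x, ‖a y‖) = ∫ y in Set.Ioo (0:ℝ) x, ‖a y‖ :=
    setIntegral_congr_set Ioo_ae_eq_Ioc.symm
  have h3 : (∫ y in Set.Ioo (0:ℝ) x, ‖a y‖) ≤ ∫ y in Set.Ioo (0:ℝ) 1, ‖a y‖ := by
    apply setIntegral_mono_set hI.norm
    · filter_upwards with y using norm_nonneg _
    · exact (Set.Ioo_subset_Ioo le_rfl hx.2).eventuallyLE
  calc ‖pInt a x‖ = ‖pInt a x‖ := rfl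
    _ ≤ _ := h1.trans (h2.le.trans h3)

lemma l_exp_plus {a : ℝ → ℂ} (hI : IntegrableOn a (Set.Ioo 0 1) volume) {x : ℝ}
    (hx : x ∈ Set.Icc (0:ℝ) 1) (c : ℝ) :
    ‖Complex.exp ((c : ℂ) * Complex.I + pInt a x)‖ ≤
      Real.exp (∫ y in Set.Ioo (0:ℝ) 1, ‖a y‖) := by
  apply l_abs_exp_le
  have h := l_pInt_bound hI hx
  have hre : ((c : ℂ) * Complex.I + pInt a x).re = (pInt a x).re := by simp
  rw [hre]
  exact (Complex.re_le_norm _).trans h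

lemma l_exp_minus {a : ℝ → ℂ} (hI : IntegrableOn a (Set.Ioo 0 1) volume) {x : ℝ}
    (hx : x ∈ Set.Icc (0:ℝ) 1) (c : ℝ) :
    ‖Complex.exp (-((c : ℂ) * Complex.I) - pInt a x)‖ ≤
      Real.exp (∫ y in Set.Ioo (0:ℝ) 1, ‖a y‖) := by
  apply l_abs_exp_le
  have h := l_pInt_bound hI hx
  have habs := Complex.abs_re_le_norm (pInt a x)
  have hre : (-((c : ℂ) * Complex.I) - pInt a x).re = -(pInt a x).re := by simp
  rw [hre]
  have := abs_le.1 habs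
  linarith [this.1]

lemma l_tri (X Y : ℂ) : ‖X - Y‖ ≤ ‖X‖ + ‖Y‖ := by
  exact norm_sub_le X Y

lemma l_norm_int_le {f : ℝ → ℂ} (hf : MemLp f 2 μ0) :
    ∫ y, ‖f y‖ ∂μ0 ≤ (eLpNorm f 2 μ0).toReal := by
  have hfint : Integrable f μ0 := hf.integrable one_le_two
  have h1 : ENNReal.ofReal (∫ y, ‖f y‖ ∂μ0) = eLpNorm f 1 μ0 := by
    rw [eLpNorm_one_eq_lintegral_enorm]
    exact ofReal_integral_norm_eq_lintegral_enorm hfint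
  have h2 : eLpNorm f 1 μ0 ≤ eLpNorm f 2 μ0 :=
    eLpNorm_le_eLpNorm_of_exponent_le one_le_two hf.1
  have h3 : (∫ y, ‖f y‖ ∂μ0) = (eLpNorm f 1 μ0).toReal := by
    rw [← h1, ENNReal.toReal_ofReal (integral_nonneg fun y => norm_nonneg _)]
  rw [h3]
  exact ENNReal.toReal_mono hf.2.ne h2

lemma l_prodInt {f : ℝ → ℂ} (φ : ℝ → ℂ) (hf : MemLp f 2 μ0)
    (hφm : ContinuousOn φ (Set.Icc 0 1))
    {E : ℝ} (hE : ∀ y ∈ Set.Icc (0:ℝ) 1, ‖φ y‖ ≤ E) :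
    IntegrableOn (fun y => φ y * f y) (Set.Ioo 0 1) volume := by
  have hfint : Integrable f μ0 := hf.integrable one_le_two
  have hφmeas : AEStronglyMeasurable φ μ0 := by
    have h := hφm.aestronglyMeasurable (μ := volume) measurableSet_Icc
    exact h.mono_measure (Measure.restrict_mono Set.Ioo_subset_Icc_self le_rfl)
  have hbd : ∀ᵐ y ∂μ0, ‖φ y‖ ≤ E := by
    rw [μ0]
    filter_upwards [ae_restrict_mem measurableSet_Ioo] with y hy
    exact hE y (Set.Ioo_subset_Icc_self hy)
  have hprod : Integrable (fun y => φ y * f y) μ0 := hfint.bdd_mul hφmeas hbd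
  simpa [μ0, IntegrableOn] using hprod

lemma l_core {f : ℝ → ℂ} (φ : ℝ → ℂ) (hf : MemLp f 2 μ0)
    (hφm : ContinuousOn φ (Set.Icc 0 1))
    {E : ℝ} (hE : ∀ y ∈ Set.Icc (0:ℝ) 1, ‖φ y‖ ≤ E) {x : ℝ}
    (hx : x ∈ Set.Icc (0:ℝ) 1) :
    ‖∫ y in (0:ℝ)..x, φ y * f y‖ ≤ E * (eLpNorm f 2 μ0).toReal := by
  have hE0 : (0:ℝ) ≤ E := le_trans (norm_nonneg _) (hE 0 (by norm_num))
  have hfint : Integrable f μ0 := hf.integrable one_le_two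
  have hφmeas : AEStronglyMeasurable φ μ0 := by
    have h := hφm.aestronglyMeasurable (μ := volume) measurableSet_Icc
    exact h.mono_measure (Measure.restrict_mono Set.Ioo_subset_Icc_self le_rfl)
  have hbd : ∀ᵐ y ∂μ0, ‖φ y‖ ≤ E := by
    rw [μ0]
    filter_upwards [ae_restrict_mem measurableSet_Ioo] with y hy
    exact hE y (Set.Ioo_subset_Icc_self hy)
  have hprod : Integrable (fun y => φ y * f y) μ0 := hfint.bdd_mul hφmeas hbd
  have hprodOn : IntegrableOn (fun y => φ y * f y) (Set.Ioo 0 1) volume := by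
    simpa [μ0, IntegrableOn] using hprod
  have h1 : ‖∫ y in (0:ℝ)..x, φ y * f y‖ ≤ ∫ y in Set.Ioc (0:ℝ) x, ‖φ y * f y‖ := by
    have := intervalIntegral.norm_integral_le_integral_norm_uIoc
      (f := fun y => φ y * f y) (a := (0:ℝ)) (b := x) (μ := volume)
    rwa [Set.uIoc_of_le hx.1] at this
  have h2 : (∫ y in Set.Ioc (0:ℝ) x, ‖φ y * f y‖) = ∫ y in Set.Ioo (0:ℝ) x, ‖φ y * f y‖ :=
    setIntegral_congr_set Ioo_ae_eq_Ioc.symm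
  have h3 : (∫ y in Set.Ioo (0:ℝ) x, ‖φ y * f y‖) ≤ ∫ y in Set.Ioo (0:ℝ) 1, ‖φ y * f y‖ := by
    apply setIntegral_mono_set hprodOn.norm
    · filter_upwards with y using norm_nonneg _
    · exact (Set.Ioo_subset_Ioo le_rfl hx.2).eventuallyLE
  have h4 : (∫ y in Set.Ioo (0:ℝ) 1, ‖φ y * f y‖) = ∫ y, ‖φ y * f y‖ ∂μ0 := rfl
  have h5 : (∫ y, ‖φ y * f y‖ ∂μ0) ≤ ∫ y, E * ‖f y‖ ∂μ0 := by
    apply integral_mono_ae hprod.norm (hfint.norm.const_mul E)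
    filter_upwards [hbd] with y hy
    calc ‖φ y * f y‖ = ‖φ y‖ * ‖f y‖ := norm_mul _ _
      _ ≤ E * ‖f y‖ := mul_le_mul_of_nonneg_right hy (norm_nonneg _)
  have h6 : (∫ y, E * ‖f y‖ ∂μ0) = E * ∫ y, ‖f y‖ ∂μ0 := integral_const_mul E _
  calc ‖∫ y in (0:ℝ)..x, φ y * f y‖ = ‖∫ y in (0:ℝ)..x, φ y * f y‖ := rfl
    _ ≤ ∫ y, E * ‖f y‖ ∂μ0 := h1.trans (h2.le.trans (h3.trans (h4.le.trans h5)))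
    _ = E * ∫ y, ‖f y‖ ∂μ0 := h6
    _ ≤ E * (eLpNorm f 2 μ0).toReal := mul_le_mul_of_nonneg_left (l_norm_int_le hf) hE0

lemma l_pInt_eq {a : ℝ → ℂ} (hI : IntegrableOn a (Set.Ioo 0 1) volume) :
    pInt a 1 = ∫ y, a y ∂μ0 := by
  rw [pInt, intervalIntegral.integral_of_le (by norm_num : (0:ℝ) ≤ 1), μ0]
  exact (setIntegral_congr_set Ioo_ae_eq_Ioc).symm

lemma l_delta (a d : ℝ → ℂ) (haint : IntegrableOn a (Set.Ioo 0 1) volume)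
    (hdint : IntegrableOn d (Set.Ioo 0 1) volume) (r₀ r₁ : ℂ) (ω : ℝ)
    (hr : ‖r₀ * r₁‖ ≠ Real.exp (∫ x, ((a x).re + (d x).re) ∂μ0)) :
    ∃ ε > (0:ℝ), ∀ k : ℤ, ε ≤ ‖Δk a d r₀ r₁ ω k‖ := by
  have haμ : Integrable a μ0 := haint
  have hdμ : Integrable d μ0 := hdint
  set Ra := (pInt a 1).re with hRa
  set Rd := (pInt d 1).re with hRd
  have hare : Integrable (fun x => (a x).re) μ0 := by
    simpa [RCLike.re_to_complex] using haμ.re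
  have hdre : Integrable (fun x => (d x).re) μ0 := by
    simpa [RCLike.re_to_complex] using hdμ.re
  have hsum : (∫ x, ((a x).re + (d x).re) ∂μ0) = Ra + Rd := by
    rw [integral_add hare hdre, hRa, hRd, l_pInt_eq haint, l_pInt_eq hdint]
    have h1 := integral_re haμ
    have h2 := integral_re hdμ
    simp only [RCLike.re_to_complex] at h1 h2
    rw [h1, h2]
  have hne : Real.exp Rd ≠ ‖r₀ * r₁‖ * Real.exp (-Ra) := by
    intro h
    apply hr
    rw [hsum]
    have : ‖r₀ * r₁‖ = Real.exp Rd * Real.exp Ra := by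
      rw [h, mul_assoc, ← Real.exp_add, neg_add_cancel, Real.exp_zero, mul_one]
    rw [this, ← Real.exp_add]
    ring_nf
  refine ⟨|Real.exp Rd - ‖r₀ * r₁‖ * Real.exp (-Ra)|,
    abs_pos.2 (sub_ne_zero.2 hne), fun k => ?_⟩
  have hA : ‖Complex.exp ((((k:ℝ) * ω : ℝ)) * Complex.I + pInt d 1)‖
      = Real.exp Rd := by
    rw [Complex.norm_exp]; congr 1; simp [hRd]
  have hB : ‖r₀ * r₁ * Complex.exp (-((((k:ℝ) * ω : ℝ)) * Complex.I) - pInt a 1)‖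
      = ‖r₀ * r₁‖ * Real.exp (-Ra) := by
    rw [norm_mul, Complex.norm_exp]; congr 2; simp [hRa]
  calc |Real.exp Rd - ‖r₀ * r₁‖ * Real.exp (-Ra)|
      = |‖Complex.exp ((((k:ℝ) * ω : ℝ)) * Complex.I + pInt d 1)‖
        - ‖r₀ * r₁ * Complex.exp (-((((k:ℝ) * ω : ℝ)) * Complex.I) - pInt a 1)‖| := by
        rw [hA, hB]
    _ ≤ ‖Complex.exp ((((k:ℝ) * ω : ℝ)) * Complex.I + pInt d 1)
        - r₀ * r₁ * Complex.exp (-((((k:ℝ) * ω : ℝ)) * Complex.I) - pInt a 1)‖ :=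
        abs_norm_sub_norm_le _ _
    _ = ‖Δk a d r₀ r₁ ω k‖ := rfl

/-- uniform (in k) bound for the explicit solution formulas:
`sup_{x∈[0,1]} (|u_k(x)| + |v_k(x)|) ≤ C (‖f_k‖_{L²} + ‖g_k‖_{L²})` with C independent
of k, f_k, g_k. -/
theorem stmt5 (a d : ℝ → ℂ) (ha : MemLp a ⊤ μ0) (hd : MemLp d ⊤ μ0)
    (r₀ r₁ : ℂ) (ω : ℝ) (hω : 0 < ω)
    (hr : ‖r₀ * r₁‖ ≠ Real.exp (∫ x, ((a x).re + (d x).re) ∂μ0)) :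
    ∃ C > (0 : ℝ), ∀ (k : ℤ) (f g : ℝ → ℂ), MemLp f 2 μ0 → MemLp g 2 μ0 →
      ∀ x ∈ Set.Icc (0:ℝ) 1,
        ‖uSol a d r₀ r₁ ω k f g x‖ + ‖vSol a d r₀ r₁ ω k f g x‖ ≤
          C * ((eLpNorm f 2 μ0).toReal + (eLpNorm g 2 μ0).toReal) := by
  have haint : IntegrableOn a (Set.Ioo 0 1) volume := l_int le_top ha
  have hdint : IntegrableOn d (Set.Ioo 0 1) volume := l_int le_top hd
  obtain ⟨ε, hε, hΔ⟩ := l_delta a d haint hdint r₀ r₁ ω hr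
  set Ia := ∫ y in Set.Ioo (0:ℝ) 1, ‖a y‖ with hIa
  set Id := ∫ y in Set.Ioo (0:ℝ) 1, ‖d y‖ with hId
  have hIa0 : 0 ≤ Ia := integral_nonneg fun y => norm_nonneg _
  have hId0 : 0 ≤ Id := integral_nonneg fun y => norm_nonneg _
  set E := Real.exp (Ia + Id) with hE
  have hE0 : 0 < E := Real.exp_pos _
  have hEa : Real.exp Ia ≤ E := Real.exp_le_exp.2 (by linarith)
  have hEd : Real.exp Id ≤ E := Real.exp_le_exp.2 (by linarith)
  refine ⟨E^2 + ((‖r₀‖ + 1)/ε) * (‖r₁‖ + 1) * (E^3 + E^4) + 1, ?_, ?_⟩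
  · have h1 : 0 ≤ ((‖r₀‖ + 1)/ε) * (‖r₁‖ + 1) * (E^3 + E^4) := by
      apply mul_nonneg (mul_nonneg (div_nonneg (by positivity) hε.le) (by positivity))
      positivity
    nlinarith [sq_nonneg E, hE0]
  intro k f g hf hg x hx
  set Nf := (eLpNorm f 2 μ0).toReal with hNf
  set Ng := (eLpNorm g 2 μ0).toReal with hNg
  have hNf0 : 0 ≤ Nf := ENNReal.toReal_nonneg
  have hNg0 : 0 ≤ Ng := ENNReal.toReal_nonneg
  -- continuity of the four oscillatory weights
  have hca : ContinuousOn (fun y : ℝ =>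
      Complex.exp ((((k : ℝ) * ω * y : ℝ) : ℂ) * Complex.I + pInt a y)) (Set.Icc 0 1) := by
    apply Complex.continuous_exp.comp_continuousOn
    apply ContinuousOn.add _ (l_cont haint)
    exact ((Complex.continuous_ofReal.comp (by continuity)).mul continuous_const).continuousOn
  have hcd : ContinuousOn (fun y : ℝ =>
      Complex.exp (-((((k : ℝ) * ω * y : ℝ) : ℂ) * Complex.I) - pInt d y)) (Set.Icc 0 1) := by
    apply Complex.continuous_exp.comp_continuousOn
    apply ContinuousOn.sub _ (l_cont hdint)
    exact (((Complex.continuous_ofReal.comp (by continuity)).mul continuous_const).neg).continuousOn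
  -- bounds on the weights
  have hba : ∀ y ∈ Set.Icc (0:ℝ) 1,
      ‖Complex.exp ((((k : ℝ) * ω * y : ℝ) : ℂ) * Complex.I + pInt a y)‖ ≤ E :=
    fun y hy => (l_exp_plus haint hy _).trans hEa
  have hbd : ∀ y ∈ Set.Icc (0:ℝ) 1,
      ‖Complex.exp (-((((k : ℝ) * ω * y : ℝ) : ℂ) * Complex.I) - pInt d y)‖ ≤ E :=
    fun y hy => (l_exp_minus hdint hy _).trans hEd
  -- integral bounds
  have hone : (1:ℝ) ∈ Set.Icc (0:ℝ) 1 := by norm_num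
  have hJ1 : ‖∫ y in (0:ℝ)..1,
      Complex.exp ((((k : ℝ) * ω * y : ℝ)) * Complex.I + pInt a y) * f y‖ ≤ E * Nf :=
    l_core _ hf hca hba hone
  have hJ2 : ‖∫ y in (0:ℝ)..1,
      Complex.exp (-((((k : ℝ) * ω * y : ℝ)) * Complex.I) - pInt d y) * g y‖ ≤ E * Ng :=
    l_core _ hg hcd hbd hone
  have hIux : ‖∫ y in (0:ℝ)..x,
      Complex.exp ((((k : ℝ) * ω * y : ℝ)) * Complex.I + pInt a y) * f y‖ ≤ E * Nf :=
    l_core _ hf hca hba hx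
  have hIvx : ‖∫ y in (0:ℝ)..x,
      Complex.exp (-((((k : ℝ) * ω * y : ℝ)) * Complex.I) - pInt d y) * g y‖ ≤ E * Ng :=
    l_core _ hg hcd hbd hx
  -- bound on wk
  set Wb := (‖r₁‖ + 1) * (E * E + E * E * E) * (Nf + Ng) with hWb
  have hWb0 : 0 ≤ Wb := by positivity
  have hwint : IntervalIntegrable (fun y =>
      Complex.exp ((((k : ℝ) * ω * y : ℝ) : ℂ) * Complex.I + pInt a y) * f y) volume 0 1 :=
    l_ii (l_prodInt _ hf hca hba) hone
  have hc1 : ‖Complex.exp (-((((k:ℝ) * ω : ℝ)) * Complex.I) - pInt a 1)‖ ≤ E :=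
    (l_exp_minus haint hone _).trans hEa
  have hc2 : ‖Complex.exp ((((k:ℝ) * ω : ℝ)) * Complex.I + pInt d 1)‖ ≤ E :=
    (l_exp_plus hdint hone _).trans hEd
  have hw : ‖wk a d r₁ ω k f g‖ ≤ Wb := by
    have heq : wk a d r₁ ω k f g =
        r₁ * Complex.exp (-((((k:ℝ) * ω : ℝ)) * Complex.I) - pInt a 1) *
        ((∫ y in (0:ℝ)..1, Complex.exp ((((k:ℝ) * ω * y : ℝ)) * Complex.I + pInt a y) * f y) -
         Complex.exp ((((k:ℝ) * ω : ℝ)) * Complex.I + pInt d 1) *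
           ∫ y in (0:ℝ)..1, Complex.exp (-((((k:ℝ) * ω * y : ℝ)) * Complex.I) - pInt d y) * g y) := by
      rw [wk, intervalIntegral.integral_sub hwint intervalIntegrable_const,
        intervalIntegral.integral_const]
      norm_num
    rw [heq, norm_mul, norm_mul]
    have hin : ‖
        ((∫ y in (0:ℝ)..1, Complex.exp ((((k:ℝ) * ω * y : ℝ)) * Complex.I + pInt a y) * f y) -
         Complex.exp ((((k:ℝ) * ω : ℝ)) * Complex.I + pInt d 1) *
           ∫ y in (0:ℝ)..1, Complex.exp (-((((k:ℝ) * ω * y : ℝ)) * Complex.I) - pInt d y) * g y)‖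
        ≤ E * Nf + E * (E * Ng) := by
      refine (l_tri _ _).trans (add_le_add hJ1 ?_)
      rw [norm_mul]
      exact mul_le_mul hc2 hJ2 (norm_nonneg _) hE0.le
    calc ‖r₁‖ * ‖Complex.exp (-((((k:ℝ) * ω : ℝ)) * Complex.I) - pInt a 1)‖
          * ‖_‖
        ≤ ‖r₁‖ * E * (E * Nf + E * (E * Ng)) := by
          apply mul_le_mul (mul_le_mul_of_nonneg_left hc1 (norm_nonneg r₁)) hin
            (norm_nonneg _) (by positivity)
      _ ≤ Wb := by
          rw [hWb]
          nlinarith [mul_nonneg (norm_nonneg r₁)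
              (mul_nonneg (mul_nonneg hE0.le hE0.le) hNg0),
            mul_nonneg (norm_nonneg r₁)
              (mul_nonneg (mul_nonneg (mul_nonneg hE0.le hE0.le) hE0.le) hNf0),
            mul_nonneg (mul_nonneg hE0.le hE0.le) hNf0,
            mul_nonneg (mul_nonneg hE0.le hE0.le) hNg0,
            mul_nonneg (mul_nonneg (mul_nonneg hE0.le hE0.le) hE0.le) hNf0,
            mul_nonneg (mul_nonneg (mul_nonneg hE0.le hE0.le) hE0.le) hNg0]
  -- bound on Δ⁻¹ factors
  have hΔk := hΔ k
  have hΔpos : 0 < ‖Δk a d r₀ r₁ ω k‖ := lt_of_lt_of_le hε hΔk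
  have hdiv0 : ‖r₀ / Δk a d r₀ r₁ ω k‖ ≤ ‖r₀‖ / ε := by
    rw [norm_div]
    exact div_le_div_of_nonneg_left (norm_nonneg _) hε hΔk
  have hdiv1 : ‖1 / Δk a d r₀ r₁ ω k‖ ≤ 1 / ε := by
    rw [norm_div, norm_one]
    exact div_le_div_of_nonneg_left one_pos.le hε hΔk
  -- bound on u
  have hu : ‖uSol a d r₀ r₁ ω k f g x‖ ≤
      E * (E * Nf + (‖r₀‖ / ε) * Wb) := by
    rw [uSol, norm_mul]
    apply mul_le_mul ((l_exp_minus haint hx _).trans hEa) _ (norm_nonneg _) hE0.le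
    calc ‖_‖ ≤ ‖∫ y in (0:ℝ)..x,
          Complex.exp ((((k : ℝ) * ω * y : ℝ)) * Complex.I + pInt a y) * f y‖ +
          ‖(r₀ / Δk a d r₀ r₁ ω k) * wk a d r₁ ω k f g‖ := norm_add_le _ _
      _ ≤ E * Nf + (‖r₀‖ / ε) * Wb := by
          apply add_le_add hIux
          rw [norm_mul]
          exact mul_le_mul hdiv0 hw (norm_nonneg _) (div_nonneg (norm_nonneg _) hε.le)
  -- bound on v
  have hv : ‖vSol a d r₀ r₁ ω k f g x‖ ≤
      E * (E * Ng + (1 / ε) * Wb) := by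
    rw [vSol, norm_mul]
    apply mul_le_mul ((l_exp_plus hdint hx _).trans hEd) _ (norm_nonneg _) hE0.le
    calc ‖_‖ ≤ ‖∫ y in (0:ℝ)..x,
          Complex.exp (-((((k : ℝ) * ω * y : ℝ)) * Complex.I) - pInt d y) * g y‖ +
          ‖(1 / Δk a d r₀ r₁ ω k) * wk a d r₁ ω k f g‖ := norm_add_le _ _
      _ ≤ E * Ng + (1 / ε) * Wb := by
          apply add_le_add hIvx
          rw [norm_mul]
          exact mul_le_mul hdiv1 hw (norm_nonneg _) (by positivity)
  -- combine
  have key : E * (E * Nf + (‖r₀‖ / ε) * Wb) + E * (E * Ng + (1 / ε) * Wb) + (Nf + Ng)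
      = (E^2 + ((‖r₀‖ + 1)/ε) * (‖r₁‖ + 1) * (E^3 + E^4) + 1) * (Nf + Ng) := by
    rw [hWb]
    field_simp
    ring
  calc ‖uSol a d r₀ r₁ ω k f g x‖ + ‖vSol a d r₀ r₁ ω k f g x‖
      ≤ E * (E * Nf + (‖r₀‖ / ε) * Wb) + E * (E * Ng + (1 / ε) * Wb) :=
        add_le_add hu hv
    _ ≤ (E^2 + ((‖r₀‖ + 1)/ε) * (‖r₁‖ + 1) * (E^3 + E^4) + 1) * (Nf + Ng) := by
        rw [← key]; linarith
end

section
/- Let ω > 0, k ∈ ℤ, and let a, b, c, d ∈ L^∞(0,1), f_k, g_k ∈ L²(0,1), r₀, r₁ ∈ ℂ with |r₀| < 1 and |r₁| < 1. Suppose there exist p, q ∈ ℝ with ess inf_{x∈(0,1)} [2 Re a(x) − |b(x)|^{2p} − |c(x)|^{2q}] > 0 and ess inf_{x∈(0,1)} [2 Re d(x) − |b(x)|^{2(1−p)} − |c(x)|^{2(1−q)}] > 0. Then there exists a constant C > 0, depending only on a, b, c, d, p, q (not on k, f_k, g_k), such that every solution (u_k, v_k) ∈ H¹(0,1)² of the system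 u_k′ = f_k − (a + ikω) u_k − b v_k, v_k′ = −g_k + (d + ikω) v_k + c u_k with boundary conditions u_k(0) = r₀ v_k(0), v_k(1) = r₁ u_k(1) satisfies ‖u_k‖²_{L²(0,1)} + ‖v_k‖²_{L²(0,1)} ≤ C (‖f_k‖²_{L²(0,1)} + ‖g_k‖²_{L²(0,1)}). -/
open MeasureTheory Complex Filter

/-- `u ∈ H¹(0,1)` with derivative `u' ∈ L²(0,1)` (absolutely continuous representative). -/
def IsH1 (u u' : ℝ → ℂ) : Prop :=
  MemLp u' 2 μ0 ∧ ∀ x ∈ Set.Icc (0:ℝ) 1, u x = u 0 + ∫ t in (0:ℝ)..x, u' t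

/- ## Auxiliary lemmas -/

lemma μ0_eq : μ0 = volume.restrict (Set.Ioo 0 1) := rfl

instance : IsFiniteMeasure μ0 :=
  ⟨by rw [μ0_eq, Measure.restrict_apply_univ]; simp [Real.volume_Ioo]⟩

instance : NullSingletonClass μ0 := by rw [μ0_eq]; infer_instance

lemma ae_mem_Ioo : ∀ᵐ x ∂μ0, x ∈ Set.Ioo (0:ℝ) 1 := by
  rw [μ0_eq]; exact ae_restrict_mem measurableSet_Ioo

lemma integrable_conj' {f : ℝ → ℂ} (h : Integrable f μ0) :
    Integrable (fun x => (starRingEnd ℂ) (f x)) μ0 := by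
  refine ⟨Complex.continuous_conj.comp_aestronglyMeasurable h.1, ?_⟩
  simpa [HasFiniteIntegral] using h.2

lemma asm_conj {f : ℝ → ℂ} (h : AEStronglyMeasurable f μ0) :
    AEStronglyMeasurable (fun x => (starRingEnd ℂ) (f x)) μ0 :=
  Complex.continuous_conj.comp_aestronglyMeasurable h

/-- a.e. strict lower bound from a positive bound below the essential infimum. -/
lemma my_ae_lt_of_lt_essInf {f : ℝ → ℝ} {e : ℝ} (he0 : 0 < e) (he : e < essInf f μ0) :
    ∀ᵐ x ∂μ0, e < f x := by
  by_cases hb : Filter.IsBoundedUnder (· ≥ ·) (ae μ0) f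
  · exact Filter.eventually_lt_of_lt_liminf he hb
  · exfalso
    have hempty : {a : ℝ | ∀ᶠ x in Filter.map f (ae μ0), a ≤ x} = ∅ := by
      ext a
      simp only [Set.mem_setOf_eq, Set.mem_empty_iff_false, iff_false]
      intro hcon
      exact hb ⟨a, by simpa [Filter.eventually_map] using hcon⟩
    have h0 : essInf f μ0 = 0 := by
      rw [essInf, Filter.liminf, Filter.limsInf, hempty, Real.sSup_empty]
    rw [h0] at he
    exact absurd (he0.trans he) (lt_irrefl 0)

/-- ℒ∞ functions are a.e. bounded. -/
lemma linfty_bound {f : ℝ → ℂ} (hf : MemLp f ⊤ μ0) :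
    ∃ M : ℝ, 0 ≤ M ∧ ∀ᵐ x ∂μ0, ‖f x‖ ≤ M := by
  refine ⟨(eLpNormEssSup f μ0).toReal, ENNReal.toReal_nonneg, ?_⟩
  have h2 : eLpNormEssSup f μ0 ≠ ⊤ := by
    have h3 := hf.2
    rw [eLpNorm_exponent_top] at h3
    exact h3.ne
  filter_upwards [ae_le_eLpNormEssSup (f := f) (μ := μ0)] with x hx
  have := ENNReal.toReal_mono h2 hx
  simpa [coe_nnnorm] using this

lemma integrable_of_bound {f : ℝ → ℝ} (hm : AEStronglyMeasurable f μ0) (M : ℝ)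
    (hb : ∀ᵐ x ∂μ0, |f x| ≤ M) : Integrable f μ0 :=
  Integrable.mono' (integrable_const M) hm (by simpa using hb)

/-- Membership in H¹ gives a.e.-measurability and a.e. boundedness on `(0,1)`. -/
lemma IsH1.bound {u u' : ℝ → ℂ} (hu : IsH1 u u') :
    AEStronglyMeasurable u μ0 ∧ ∃ M, 0 ≤ M ∧ ∀ᵐ x ∂μ0, ‖u x‖ ≤ M := by
  have hi : Integrable u' μ0 := hu.1.integrable one_le_two
  set h₀ : ℝ → ℂ := (Set.Ioo (0:ℝ) 1).indicator u' with hh₀def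
  have hh₀ : Integrable h₀ volume := by
    rw [hh₀def, integrable_indicator_iff measurableSet_Ioo]
    exact hi
  set U : ℝ → ℂ := fun x => u 0 + ∫ t in (0:ℝ)..x, h₀ t with hUdef
  have hUc : Continuous U :=
    continuous_const.add (intervalIntegral.continuous_primitive
      (fun a b => hh₀.intervalIntegrable) 0)
  have heq : ∀ᵐ x ∂μ0, u x = U x := by
    filter_upwards [ae_mem_Ioo] with x hx
    rw [hu.2 x ⟨hx.1.le, hx.2.le⟩]
    show _ = u 0 + ∫ t in (0:ℝ)..x, h₀ t
    congr 1
    refine intervalIntegral.integral_congr_ae (Filter.Eventually.of_forall ?_)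
    intro t ht
    rw [Set.uIoc_of_le hx.1.le] at ht
    have hmem' : t ∈ Set.Ioo (0:ℝ) 1 := ⟨ht.1, lt_of_le_of_lt ht.2 hx.2⟩
    rw [hh₀def, Set.indicator_of_mem hmem']
  refine ⟨hUc.aestronglyMeasurable.congr (Filter.EventuallyEq.symm heq), ?_⟩
  refine ⟨‖u 0‖ + ∫ t, ‖h₀ t‖, add_nonneg (norm_nonneg _)
    (integral_nonneg fun t => norm_nonneg _), ?_⟩
  filter_upwards [heq, ae_mem_Ioo] with x hx hmem
  rw [hx]
  show ‖u 0 + ∫ t in (0:ℝ)..x, h₀ t‖ ≤ _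
  refine (norm_add_le _ _).trans (add_le_add (le_refl _) ?_)
  calc ‖∫ t in (0:ℝ)..x, h₀ t‖ ≤ ∫ t in (0:ℝ)..x, ‖h₀ t‖ :=
        intervalIntegral.norm_integral_le_integral_norm hmem.1.le
    _ = ∫ t in Set.Ioc 0 x, ‖h₀ t‖ := intervalIntegral.integral_of_le hmem.1.le
    _ ≤ ∫ t, ‖h₀ t‖ := setIntegral_le_integral hh₀.norm
        (Filter.Eventually.of_forall fun t => norm_nonneg _)

/-- Fubini identity: `2 Re ∫ h(x) conj(∫_{t ≤ x} h(t) dt) dx = ‖∫ h‖²`. -/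
lemma fubini_key {h : ℝ → ℂ} (hh : Integrable h μ0) :
    2 * ∫ x, (h x * (starRingEnd ℂ) (∫ t in Set.Iic x, h t ∂μ0)).re ∂μ0
      = ‖∫ x, h x ∂μ0‖ ^ 2 := by
  set G : ℝ × ℝ → ℂ := fun z => h z.1 * (starRingEnd ℂ) (h z.2) with hGdef
  have hGint : Integrable G (μ0.prod μ0) := hh.mul_prod (integrable_conj' hh)
  set S : Set (ℝ × ℝ) := {z | z.2 ≤ z.1} with hSdef
  have hS : MeasurableSet S := measurableSet_le measurable_snd measurable_fst
  set T : Set (ℝ × ℝ) := {z | z.1 ≤ z.2} with hTdef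
  have hT : MeasurableSet T := measurableSet_le measurable_fst measurable_snd
  set D : Set (ℝ × ℝ) := {z | z.1 = z.2} with hDdef
  have hD : MeasurableSet D := measurableSet_eq_fun measurable_fst measurable_snd
  set F : ℝ × ℝ → ℂ := S.indicator G with hFdef
  have hFint : Integrable F (μ0.prod μ0) := hGint.indicator hS
  set I : ℂ := ∫ z, F z ∂(μ0.prod μ0) with hIdef
  -- Step 1: the LHS integral equals I.re
  have hinner : ∀ x, ∫ t, F (x, t) ∂μ0
      = h x * (starRingEnd ℂ) (∫ t in Set.Iic x, h t ∂μ0) := by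
    intro x
    have hfun : (fun t => F (x, t))
        = (Set.Iic x).indicator (fun t => h x * (starRingEnd ℂ) (h t)) := by
      funext t
      by_cases ht : t ≤ x <;>
        simp [hFdef, hSdef, hGdef, Set.indicator_apply, ht]
    rw [hfun, integral_indicator measurableSet_Iic, integral_const_mul, integral_conj]
  have step1 : ∫ x, (h x * (starRingEnd ℂ) (∫ t in Set.Iic x, h t ∂μ0)).re ∂μ0 = I.re := by
    have e1 : ∀ᵐ x ∂μ0,
        (h x * (starRingEnd ℂ) (∫ t in Set.Iic x, h t ∂μ0)).re
          = ∫ t, (F (x, t)).re ∂μ0 := by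
      filter_upwards [hFint.prod_right_ae] with x hx
      rw [← hinner x]
      simpa [RCLike.re_to_complex] using (integral_re hx).symm
    rw [integral_congr_ae e1]
    have e2 := MeasureTheory.integral_prod (μ := μ0) (ν := μ0)
      (fun z => (F z).re) hFint.re
    rw [← e2]
    simpa [RCLike.re_to_complex] using integral_re hFint
  -- Step 2: conj I is the integral over the upper triangle
  have step2 : (starRingEnd ℂ) I = ∫ z, T.indicator G z ∂(μ0.prod μ0) := by
    rw [hIdef, ← integral_conj, ← MeasureTheory.integral_prod_swap]
    congr 1
    funext z
    by_cases hz : z.1 ≤ z.2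
    · have : z.swap ∈ S := hz
      simp only [Set.indicator_of_mem this, Set.indicator_of_mem (show z ∈ T from hz),
        hFdef, hGdef, Prod.fst_swap, Prod.snd_swap, map_mul, RingHomCompTriple.comp_apply,
        RingHom.id_apply, Complex.conj_conj]
      ring
    · have : z.swap ∉ S := hz
      simp [hFdef, Set.indicator_of_notMem this,
        Set.indicator_of_notMem (show z ∉ T from hz)]
  -- Step 3: I + conj I = (∫ h) * conj (∫ h)
  have hDnull : (μ0.prod μ0) D = 0 := by
    rw [Measure.prod_apply hD]
    have : ∀ x : ℝ, μ0 (Prod.mk x ⁻¹' D) = 0 := by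
      intro x
      have : Prod.mk x ⁻¹' D = {x} := by
        ext t; simp [hDdef, eq_comm]
      rw [this]
      exact measure_singleton x
    simp [this]
  have step3 : I + (starRingEnd ℂ) I
      = (∫ x, h x ∂μ0) * (starRingEnd ℂ) (∫ x, h x ∂μ0) := by
    rw [step2, hIdef, ← integral_add hFint (hGint.indicator hT)]
    have hsplit : (fun z => F z + T.indicator G z)
        = fun z => G z + D.indicator G z := by
      funext z
      rcases lt_trichotomy z.1 z.2 with hlt | heq | hgt
      · have h1 : z ∉ S := not_le.mpr hlt
        have h2 : z ∈ T := hlt.le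
        have h3 : z ∉ D := ne_of_lt hlt
        simp [hFdef, Set.indicator_of_notMem h1, Set.indicator_of_mem h2,
          Set.indicator_of_notMem h3]
      · have h1 : z ∈ S := heq.ge
        have h2 : z ∈ T := heq.le
        have h3 : z ∈ D := heq
        simp [hFdef, Set.indicator_of_mem h1, Set.indicator_of_mem h2,
          Set.indicator_of_mem h3]
      · have h1 : z ∈ S := hgt.le
        have h2 : z ∉ T := not_le.mpr hgt
        have h3 : z ∉ D := (ne_of_gt hgt)
        simp [hFdef, Set.indicator_of_mem h1, Set.indicator_of_notMem h2,
          Set.indicator_of_notMem h3]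
    rw [hsplit, integral_add hGint (hGint.indicator hD),
      integral_indicator hD, setIntegral_measure_zero _ hDnull, add_zero,
      hGdef]
    rw [MeasureTheory.integral_prod_mul (μ := μ0) (ν := μ0) h
      (fun t => (starRingEnd ℂ) (h t)), integral_conj]
  -- Conclude
  have hre := congrArg Complex.re step3
  rw [Complex.add_conj] at hre
  simp only [Complex.ofReal_re] at hre
  rw [Complex.mul_conj] at hre
  rw [step1, hre]
  norm_cast
  rw [Complex.normSq_eq_norm_sq]

/-- FTC-type identity for H¹ functions. -/
lemma h1_identity {u u' : ℝ → ℂ} (hu : IsH1 u u')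
    (humeas : AEStronglyMeasurable u μ0) {Mu : ℝ} (hMu : ∀ᵐ x ∂μ0, ‖u x‖ ≤ Mu) :
    ‖u 1‖ ^ 2 - ‖u 0‖ ^ 2 = 2 * ∫ x, (u' x * (starRingEnd ℂ) (u x)).re ∂μ0 := by
  have hi : Integrable u' μ0 := hu.1.integrable one_le_two
  set w : ℝ → ℂ := fun x => ∫ t in Set.Iic x, u' t ∂μ0 with hwdef
  set W : ℂ := ∫ x, u' x ∂μ0 with hWdef
  -- the set-integral translation
  have hae : ∀ᵐ x ∂μ0, u x = u 0 + w x := by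
    filter_upwards [ae_mem_Ioo] with x hx
    rw [hu.2 x ⟨hx.1.le, hx.2.le⟩]
    congr 1
    rw [intervalIntegral.integral_of_le hx.1.le, hwdef]
    show ∫ t in Set.Ioc 0 x, u' t = ∫ t in Set.Iic x, u' t ∂μ0
    have hset : Set.Iic x ∩ Set.Ioo 0 1 = Set.Ioc 0 x := by
      ext t
      constructor
      · rintro ⟨h1, h2, _⟩; exact ⟨h2, h1⟩
      · rintro ⟨h1, h2⟩; exact ⟨h2, h1, lt_of_le_of_lt h2 hx.2⟩
    rw [μ0_eq, Measure.restrict_restrict measurableSet_Iic, hset]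
  have hu1 : u 1 = u 0 + W := by
    rw [hu.2 1 ⟨zero_le_one, le_refl 1⟩]
    congr 1
    rw [intervalIntegral.integral_of_le zero_le_one, hWdef, μ0_eq]
    exact MeasureTheory.integral_Ioc_eq_integral_Ioo
  -- integrabilities
  have hasm1 : AEStronglyMeasurable (fun x => (u' x * (starRingEnd ℂ) (u x)).re) μ0 :=
    (hi.1.mul (asm_conj humeas)).re
  have hint1 : Integrable (fun x => (u' x * (starRingEnd ℂ) (u x)).re) μ0 := by
    refine Integrable.mono' (hi.norm.mul_const Mu) hasm1 ?_
    filter_upwards [hMu] with x hx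
    calc ‖(u' x * (starRingEnd ℂ) (u x)).re‖ ≤ ‖u' x * (starRingEnd ℂ) (u x)‖ := by
          exact Complex.abs_re_le_norm _
      _ = ‖u' x‖ * ‖u x‖ := by rw [norm_mul, RCLike.norm_conj]
      _ ≤ ‖u' x‖ * Mu := by
          exact mul_le_mul_of_nonneg_left hx (norm_nonneg _)
  have hint2 : Integrable (fun x => (u' x * (starRingEnd ℂ) (u 0)).re) μ0 :=
    (hi.mul_const _).re
  -- split the integral
  have hsplit : ∫ x, (u' x * (starRingEnd ℂ) (w x)).re ∂μ0
      = (∫ x, (u' x * (starRingEnd ℂ) (u x)).re ∂μ0)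
        - ∫ x, (u' x * (starRingEnd ℂ) (u 0)).re ∂μ0 := by
    rw [← integral_sub hint1 hint2]
    refine integral_congr_ae ?_
    filter_upwards [hae] with x hx
    rw [hx]
    simp only [map_add, mul_add, Complex.add_re]
    ring
  have hkey := fubini_key hi
  rw [hsplit] at hkey
  have hconst : ∫ x, (u' x * (starRingEnd ℂ) (u 0)).re ∂μ0
      = (W * (starRingEnd ℂ) (u 0)).re := by
    have e3 := integral_re (μ := μ0) (hi.mul_const ((starRingEnd ℂ) (u 0)))
    simp only [RCLike.re_to_complex] at e3
    rw [e3, ← integral_mul_const]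
  -- final algebra
  rw [hu1]
  have hexp : ‖u 0 + W‖ ^ 2 = ‖u 0‖ ^ 2 + 2 * (W * (starRingEnd ℂ) (u 0)).re + ‖W‖ ^ 2 := by
    have h1 : (‖u 0 + W‖ : ℝ) ^ 2 = Complex.normSq (u 0 + W) := by
      rw [Complex.normSq_eq_norm_sq]
    have h2 : (‖u 0‖ : ℝ) ^ 2 = Complex.normSq (u 0) := by
      rw [Complex.normSq_eq_norm_sq]
    have h3 : (‖W‖ : ℝ) ^ 2 = Complex.normSq W := by
      rw [Complex.normSq_eq_norm_sq]
    rw [h1, h2, h3, Complex.normSq_add]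
    have : (u 0 * (starRingEnd ℂ) W).re = (W * (starRingEnd ℂ) (u 0)).re := by
      rw [← Complex.conj_re (u 0 * (starRingEnd ℂ) W), map_mul, Complex.conj_conj]
      ring_nf
    rw [this]
    ring
  rw [hexp]
  rw [hconst] at hkey
  linarith [hkey]


/-- Young-type inequality with `rpow` weights. -/
lemma young_rpow {β : ℝ} (hβ : 0 ≤ β) {s t : ℝ} (hs : 0 ≤ s) (ht : 0 ≤ t) (p : ℝ) :
    2 * β * s * t ≤ β ^ (2 * p) * s ^ 2 + β ^ (2 * (1 - p)) * t ^ 2 := by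
  rcases eq_or_lt_of_le hβ with h0 | h0
  · have h1 : (0:ℝ) ≤ β ^ (2*p) := Real.rpow_nonneg hβ _
    have h2 : (0:ℝ) ≤ β ^ (2*(1-p)) := Real.rpow_nonneg hβ _
    have hz : 2 * β * s * t = 0 := by rw [← h0]; ring
    rw [hz]
    nlinarith [mul_nonneg h1 (sq_nonneg s), mul_nonneg h2 (sq_nonneg t)]
  · have hp1 : β ^ (2*p) = (β ^ p) ^ (2:ℕ) := by
      rw [← Real.rpow_natCast (β ^ p) 2, ← Real.rpow_mul hβ]
      congr 1
      push_cast
      ring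
    have hp2 : β ^ (2*(1-p)) = (β ^ (1-p)) ^ (2:ℕ) := by
      rw [← Real.rpow_natCast (β ^ (1-p)) 2, ← Real.rpow_mul hβ]
      congr 1
      push_cast
      ring
    have hmul : β ^ p * β ^ (1-p) = β := by
      rw [← Real.rpow_add h0]
      norm_num
    have h9 : 2 * β * s * t = 2 * (β ^ p * s) * (β ^ (1-p) * t) := by
      rw [show (2:ℝ) * (β ^ p * s) * (β ^ (1-p) * t)
        = 2 * (β ^ p * β ^ (1-p)) * s * t from by ring, hmul]
    calc 2 * β * s * t = 2 * (β ^ p * s) * (β ^ (1-p) * t) := h9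
      _ ≤ (β ^ p * s)^2 + (β ^ (1-p) * t)^2 := two_mul_le_add_sq _ _
      _ = β ^ (2*p) * s ^ 2 + β ^ (2*(1-p)) * t ^ 2 := by rw [hp1, hp2]; ring

lemma amgm_eps {ε : ℝ} (hε : 0 < ε) (s t : ℝ) :
    2 * s * t ≤ 2/ε * s^2 + ε/2 * t^2 := by
  have expand : 2/ε * s^2 + ε/2 * t^2 - 2*s*t = (2*s - ε*t)^2 / (2*ε) := by
    field_simp
    ring
  have h2 : (0:ℝ) ≤ (2*s - ε*t)^2 / (2*ε) := div_nonneg (sq_nonneg _) (by linarith)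
  linarith

lemma re_le_norm (z : ℂ) : z.re ≤ ‖z‖ := by
  exact Complex.re_le_norm z

lemma neg_norm_le_re (z : ℂ) : -‖z‖ ≤ z.re := by
  have := Complex.abs_re_le_norm z
  linarith [abs_le.mp this]

set_option maxHeartbeats 1000000 in
/-- a priori L²-estimate, uniform in `k`, for solutions of the Fourier-mode
system under condition (coef+) of the paper. -/
theorem stmt8 (ω : ℝ) (hω : 0 < ω) (a b c d : ℝ → ℂ)
    (ha : MemLp a ⊤ μ0) (hb : MemLp b ⊤ μ0) (hc : MemLp c ⊤ μ0) (hd : MemLp d ⊤ μ0)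
    (r₀ r₁ : ℂ) (hr₀ : ‖r₀‖ < 1) (hr₁ : ‖r₁‖ < 1)
    (p q : ℝ)
    (hcoef₁ : 0 < essInf (fun x => 2 * (a x).re - ‖b x‖ ^ (2 * p) - ‖c x‖ ^ (2 * q)) μ0)
    (hcoef₂ : 0 < essInf
      (fun x => 2 * (d x).re - ‖b x‖ ^ (2 * (1 - p)) - ‖c x‖ ^ (2 * (1 - q))) μ0) :
    ∃ C > (0 : ℝ), ∀ (k : ℤ) (fk gk : ℝ → ℂ), MemLp fk 2 μ0 → MemLp gk 2 μ0 →
      ∀ u u' v v' : ℝ → ℂ, IsH1 u u' → IsH1 v v' →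
        (∀ᵐ x ∂μ0, u' x = fk x - (a x + ((k : ℝ) * ω : ℝ) * Complex.I) * u x - b x * v x) →
        (∀ᵐ x ∂μ0, v' x = -gk x + (d x + ((k : ℝ) * ω : ℝ) * Complex.I) * v x + c x * u x) →
        u 0 = r₀ * v 0 → v 1 = r₁ * u 1 →
        (∫ x, ‖u x‖ ^ 2 ∂μ0) + ∫ x, ‖v x‖ ^ 2 ∂μ0 ≤
          C * ((∫ x, ‖fk x‖ ^ 2 ∂μ0) + ∫ x, ‖gk x‖ ^ 2 ∂μ0) := by
  obtain ⟨Ma, hMa0, hMa⟩ := linfty_bound ha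
  obtain ⟨Mb, hMb0, hMb⟩ := linfty_bound hb
  obtain ⟨Mc, hMc0, hMc⟩ := linfty_bound hc
  obtain ⟨Md, hMd0, hMd⟩ := linfty_bound hd
  set e₁ := essInf (fun x => 2 * (a x).re - ‖b x‖ ^ (2 * p) - ‖c x‖ ^ (2 * q)) μ0 with he₁
  set e₂ := essInf
    (fun x => 2 * (d x).re - ‖b x‖ ^ (2 * (1 - p)) - ‖c x‖ ^ (2 * (1 - q))) μ0 with he₂
  set ε := min e₁ e₂ / 2 with hεdef
  have hε : 0 < ε := div_pos (lt_min hcoef₁ hcoef₂) two_pos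
  have hεlt : ε < min e₁ e₂ := by
    have := lt_min hcoef₁ hcoef₂
    rw [hεdef]
    linarith
  have hae₁ : ∀ᵐ x ∂μ0, ε < 2 * (a x).re - ‖b x‖ ^ (2 * p) - ‖c x‖ ^ (2 * q) :=
    my_ae_lt_of_lt_essInf hε (lt_of_lt_of_le hεlt (min_le_left _ _))
  have hae₂ : ∀ᵐ x ∂μ0,
      ε < 2 * (d x).re - ‖b x‖ ^ (2 * (1 - p)) - ‖c x‖ ^ (2 * (1 - q)) :=
    my_ae_lt_of_lt_essInf hε (lt_of_lt_of_le hεlt (min_le_right _ _))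
  refine ⟨4 / ε^2, by positivity, ?_⟩
  intro k fk gk hfk hgk u u' v v' hu hv hodeu hodev hbc0 hbc1
  obtain ⟨hum, Mu, hMu0, hMu⟩ := hu.bound
  obtain ⟨hvm, Mv, hMv0, hMv⟩ := hv.bound
  have hu'i : Integrable u' μ0 := hu.1.integrable one_le_two
  have hv'i : Integrable v' μ0 := hv.1.integrable one_le_two
  have hfi : Integrable fk μ0 := hfk.integrable one_le_two
  have hgi : Integrable gk μ0 := hgk.integrable one_le_two
  -- the six integrands
  set A1 : ℝ → ℝ := fun x => 2 * (fk x * (starRingEnd ℂ) (u x)).re with hA1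
  set A2 : ℝ → ℝ := fun x => 2 * (a x).re * ‖u x‖^2 with hA2
  set A3 : ℝ → ℝ := fun x => 2 * (b x * v x * (starRingEnd ℂ) (u x)).re with hA3
  set B1 : ℝ → ℝ := fun x => 2 * (gk x * (starRingEnd ℂ) (v x)).re with hB1
  set B2 : ℝ → ℝ := fun x => 2 * (d x).re * ‖v x‖^2 with hB2
  set B3 : ℝ → ℝ := fun x => 2 * (c x * u x * (starRingEnd ℂ) (v x)).re with hB3
  -- integrability of everything
  have iu2 : Integrable (fun x => ‖u x‖^2) μ0 := by
    refine integrable_of_bound (hum.norm.pow 2) (Mu^2) ?_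
    filter_upwards [hMu] with x hx
    show |‖u x‖^2| ≤ Mu^2
    rw [_root_.abs_of_nonneg (sq_nonneg (‖u x‖))]
    exact pow_le_pow_left₀ (norm_nonneg _) hx 2
  have iv2 : Integrable (fun x => ‖v x‖^2) μ0 := by
    refine integrable_of_bound (hvm.norm.pow 2) (Mv^2) ?_
    filter_upwards [hMv] with x hx
    show |‖v x‖^2| ≤ Mv^2
    rw [_root_.abs_of_nonneg (sq_nonneg (‖v x‖))]
    exact pow_le_pow_left₀ (norm_nonneg _) hx 2
  have if2 : Integrable (fun x => ‖fk x‖^2) μ0 := by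
    have h := hfk.integrable_norm_rpow (by norm_num) (by norm_num)
    have h2 : (fun x => ‖fk x‖ ^ ((2:ENNReal).toReal)) = fun x => ‖fk x‖^2 := by
      funext x
      rw [ENNReal.toReal_ofNat]
      norm_cast
    rwa [h2] at h
  have ig2 : Integrable (fun x => ‖gk x‖^2) μ0 := by
    have h := hgk.integrable_norm_rpow (by norm_num) (by norm_num)
    have h2 : (fun x => ‖gk x‖ ^ ((2:ENNReal).toReal)) = fun x => ‖gk x‖^2 := by
      funext x
      rw [ENNReal.toReal_ofNat]
      norm_cast
    rwa [h2] at h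
  have iA1 : Integrable A1 μ0 := by
    refine Integrable.mono' ((hfi.norm.mul_const Mu).const_mul 2)
      (((hfk.1.mul (asm_conj hum)).re).const_mul 2) ?_
    filter_upwards [hMu] with x hx
    rw [hA1]
    have h1 : |(fk x * (starRingEnd ℂ) (u x)).re| ≤ ‖fk x‖ * ‖u x‖ := by
      have h2 := Complex.abs_re_le_norm (fk x * (starRingEnd ℂ) (u x))
      rw [norm_mul, RCLike.norm_conj] at h2
      exact h2
    have h3 : ‖fk x‖ * ‖u x‖ ≤ ‖fk x‖ * Mu :=
      mul_le_mul_of_nonneg_left hx (norm_nonneg _)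
    calc ‖2 * (fk x * (starRingEnd ℂ) (u x)).re‖
        = 2 * |(fk x * (starRingEnd ℂ) (u x)).re| := by
          rw [Real.norm_eq_abs, abs_mul]; norm_num
      _ ≤ 2 * (‖fk x‖ * Mu) := by nlinarith
  have iB1 : Integrable B1 μ0 := by
    refine Integrable.mono' ((hgi.norm.mul_const Mv).const_mul 2)
      (((hgk.1.mul (asm_conj hvm)).re).const_mul 2) ?_
    filter_upwards [hMv] with x hx
    rw [hB1]
    have h1 : |(gk x * (starRingEnd ℂ) (v x)).re| ≤ ‖gk x‖ * ‖v x‖ := by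
      have h2 := Complex.abs_re_le_norm (gk x * (starRingEnd ℂ) (v x))
      rw [norm_mul, RCLike.norm_conj] at h2
      exact h2
    have h3 : ‖gk x‖ * ‖v x‖ ≤ ‖gk x‖ * Mv :=
      mul_le_mul_of_nonneg_left hx (norm_nonneg _)
    calc ‖2 * (gk x * (starRingEnd ℂ) (v x)).re‖
        = 2 * |(gk x * (starRingEnd ℂ) (v x)).re| := by
          rw [Real.norm_eq_abs, abs_mul]; norm_num
      _ ≤ 2 * (‖gk x‖ * Mv) := by nlinarith
  have iA2 : Integrable A2 μ0 := by
    refine integrable_of_bound ((ha.1.re.const_mul 2).mul (hum.norm.pow 2))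
      (2 * Ma * Mu^2) ?_
    filter_upwards [hMa, hMu] with x h1 h2
    rw [hA2]
    have h3 : |(a x).re| ≤ Ma := le_trans (by
      exact Complex.abs_re_le_norm (a x)) h1
    have h4 : ‖u x‖^2 ≤ Mu^2 := pow_le_pow_left₀ (norm_nonneg _) h2 2
    have h5 : (0:ℝ) ≤ ‖u x‖^2 := sq_nonneg _
    calc |2 * (a x).re * ‖u x‖^2| = 2 * |(a x).re| * ‖u x‖^2 := by
          rw [abs_mul, abs_mul, _root_.abs_of_nonneg h5]; norm_num
      _ ≤ 2 * Ma * Mu^2 := by nlinarith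
  have iB2 : Integrable B2 μ0 := by
    refine integrable_of_bound ((hd.1.re.const_mul 2).mul (hvm.norm.pow 2))
      (2 * Md * Mv^2) ?_
    filter_upwards [hMd, hMv] with x h1 h2
    rw [hB2]
    have h3 : |(d x).re| ≤ Md := le_trans (by
      exact Complex.abs_re_le_norm (d x)) h1
    have h4 : ‖v x‖^2 ≤ Mv^2 := pow_le_pow_left₀ (norm_nonneg _) h2 2
    have h5 : (0:ℝ) ≤ ‖v x‖^2 := sq_nonneg _
    calc |2 * (d x).re * ‖v x‖^2| = 2 * |(d x).re| * ‖v x‖^2 := by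
          rw [abs_mul, abs_mul, _root_.abs_of_nonneg h5]; norm_num
      _ ≤ 2 * Md * Mv^2 := by nlinarith
  have iA3 : Integrable A3 μ0 := by
    refine integrable_of_bound ((((hb.1.mul hvm).mul (asm_conj hum)).re).const_mul 2)
      (2 * (Mb * Mv * Mu)) ?_
    filter_upwards [hMb, hMv, hMu] with x h1 h2 h3
    rw [hA3]
    have h4 : |(b x * v x * (starRingEnd ℂ) (u x)).re| ≤ ‖b x‖ * ‖v x‖ * ‖u x‖ := by
      have h5 := Complex.abs_re_le_norm (b x * v x * (starRingEnd ℂ) (u x))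
      rw [norm_mul, norm_mul, RCLike.norm_conj] at h5
      exact h5
    have h6 : ‖b x‖ * ‖v x‖ * ‖u x‖ ≤ Mb * Mv * Mu := by
      apply mul_le_mul (mul_le_mul h1 h2 (norm_nonneg _) hMb0) h3 (norm_nonneg _)
      positivity
    calc |2 * (b x * v x * (starRingEnd ℂ) (u x)).re|
        = 2 * |(b x * v x * (starRingEnd ℂ) (u x)).re| := by rw [abs_mul]; norm_num
      _ ≤ 2 * (Mb * Mv * Mu) := by nlinarith
  have iB3 : Integrable B3 μ0 := by
    refine integrable_of_bound ((((hc.1.mul hum).mul (asm_conj hvm)).re).const_mul 2)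
      (2 * (Mc * Mu * Mv)) ?_
    filter_upwards [hMc, hMu, hMv] with x h1 h2 h3
    rw [hB3]
    have h4 : |(c x * u x * (starRingEnd ℂ) (v x)).re| ≤ ‖c x‖ * ‖u x‖ * ‖v x‖ := by
      have h5 := Complex.abs_re_le_norm (c x * u x * (starRingEnd ℂ) (v x))
      rw [norm_mul, norm_mul, RCLike.norm_conj] at h5
      exact h5
    have h6 : ‖c x‖ * ‖u x‖ * ‖v x‖ ≤ Mc * Mu * Mv := by
      apply mul_le_mul (mul_le_mul h1 h2 (norm_nonneg _) hMc0) h3 (norm_nonneg _)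
      positivity
    calc |2 * (c x * u x * (starRingEnd ℂ) (v x)).re|
        = 2 * |(c x * u x * (starRingEnd ℂ) (v x)).re| := by rw [abs_mul]; norm_num
      _ ≤ 2 * (Mc * Mu * Mv) := by nlinarith
  -- energy identities
  have idu := h1_identity hu hum hMu
  have idv := h1_identity hv hvm hMv
  -- rewrite integrands via the ODE
  have hPu : ∀ᵐ x ∂μ0, 2 * (u' x * (starRingEnd ℂ) (u x)).re = A1 x - A2 x - A3 x := by
    filter_upwards [hodeu] with x hx
    rw [hA1, hA2, hA3, hx]
    have hsq : u x * (starRingEnd ℂ) (u x) = ((‖u x‖^2 : ℝ) : ℂ) := by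
      rw [Complex.mul_conj]
      norm_cast
      rw [Complex.normSq_eq_norm_sq]
    have expand : (fk x - (a x + ((k : ℝ) * ω : ℝ) * Complex.I) * u x - b x * v x)
          * (starRingEnd ℂ) (u x)
        = fk x * (starRingEnd ℂ) (u x)
          - (a x + ((k : ℝ) * ω : ℝ) * Complex.I) * ((‖u x‖^2 : ℝ) : ℂ)
          - b x * v x * (starRingEnd ℂ) (u x) := by
      rw [← hsq]
      ring
    rw [expand]
    simp only [Complex.sub_re, Complex.mul_re, Complex.add_re, Complex.add_im,
      Complex.ofReal_re, Complex.ofReal_im, Complex.I_re, Complex.I_im, Complex.mul_im]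
    ring
  have hPv : ∀ᵐ x ∂μ0, 2 * (v' x * (starRingEnd ℂ) (v x)).re = -B1 x + B2 x + B3 x := by
    filter_upwards [hodev] with x hx
    rw [hB1, hB2, hB3, hx]
    have hsq : v x * (starRingEnd ℂ) (v x) = ((‖v x‖^2 : ℝ) : ℂ) := by
      rw [Complex.mul_conj]
      norm_cast
      rw [Complex.normSq_eq_norm_sq]
    have expand : (-gk x + (d x + ((k : ℝ) * ω : ℝ) * Complex.I) * v x + c x * u x)
          * (starRingEnd ℂ) (v x)
        = -(gk x * (starRingEnd ℂ) (v x))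
          + (d x + ((k : ℝ) * ω : ℝ) * Complex.I) * ((‖v x‖^2 : ℝ) : ℂ)
          + c x * u x * (starRingEnd ℂ) (v x) := by
      rw [← hsq]
      ring
    rw [expand]
    simp only [Complex.add_re, Complex.neg_re, Complex.mul_re, Complex.add_im,
      Complex.ofReal_re, Complex.ofReal_im, Complex.I_re, Complex.I_im, Complex.mul_im]
    ring
  -- integral identities
  have hEu : ‖u 1‖^2 - ‖u 0‖^2 = (∫ x, A1 x ∂μ0) - (∫ x, A2 x ∂μ0) - ∫ x, A3 x ∂μ0 := by
    rw [idu]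
    have h1 : (2:ℝ) * ∫ x, (u' x * (starRingEnd ℂ) (u x)).re ∂μ0
        = ∫ x, 2 * (u' x * (starRingEnd ℂ) (u x)).re ∂μ0 := (integral_const_mul 2 _).symm
    have i12 : Integrable (fun x => A1 x - A2 x) μ0 := iA1.sub iA2
    rw [h1, integral_congr_ae hPu, integral_sub i12 iA3, integral_sub iA1 iA2]
  have hEv : ‖v 1‖^2 - ‖v 0‖^2 = -(∫ x, B1 x ∂μ0) + (∫ x, B2 x ∂μ0) + ∫ x, B3 x ∂μ0 := by
    rw [idv]
    have h1 : (2:ℝ) * ∫ x, (v' x * (starRingEnd ℂ) (v x)).re ∂μ0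
        = ∫ x, 2 * (v' x * (starRingEnd ℂ) (v x)).re ∂μ0 := (integral_const_mul 2 _).symm
    have in1 : Integrable (fun x => -B1 x) μ0 := iB1.neg
    have i12 : Integrable (fun x => -B1 x + B2 x) μ0 := in1.add iB2
    rw [h1, integral_congr_ae hPv, integral_add i12 iB3,
      integral_add in1 iB2, integral_neg]
  -- boundary conditions
  have hbd0 : ‖u 0‖^2 ≤ ‖v 0‖^2 := by
    rw [hbc0, norm_mul]
    have h1 : ‖r₀‖ < 1 := by exact hr₀
    have h2 : ‖r₀‖^2 ≤ 1 := by nlinarith [norm_nonneg r₀]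
    calc (‖r₀‖ * ‖v 0‖)^2 = ‖r₀‖^2 * ‖v 0‖^2 := by ring
      _ ≤ 1 * ‖v 0‖^2 := mul_le_mul_of_nonneg_right h2 (sq_nonneg _)
      _ = ‖v 0‖^2 := one_mul _
  have hbd1 : ‖v 1‖^2 ≤ ‖u 1‖^2 := by
    rw [hbc1, norm_mul]
    have h1 : ‖r₁‖ < 1 := by exact hr₁
    have h2 : ‖r₁‖^2 ≤ 1 := by nlinarith [norm_nonneg r₁]
    calc (‖r₁‖ * ‖u 1‖)^2 = ‖r₁‖^2 * ‖u 1‖^2 := by ring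
      _ ≤ 1 * ‖u 1‖^2 := mul_le_mul_of_nonneg_right h2 (sq_nonneg _)
      _ = ‖u 1‖^2 := one_mul _
  -- main energy estimate
  have hE : (∫ x, A2 x ∂μ0) + (∫ x, B2 x ∂μ0) + (∫ x, A3 x ∂μ0) + (∫ x, B3 x ∂μ0)
      ≤ (∫ x, A1 x ∂μ0) + ∫ x, B1 x ∂μ0 := by linarith
  -- pointwise lower bound
  have hlow : ε * (∫ x, ‖u x‖^2 ∂μ0) + ε * (∫ x, ‖v x‖^2 ∂μ0)
      ≤ (∫ x, A2 x ∂μ0) + (∫ x, B2 x ∂μ0) + (∫ x, A3 x ∂μ0) + ∫ x, B3 x ∂μ0 := by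
    have hmono : ∫ x, (ε * ‖u x‖^2 + ε * ‖v x‖^2) ∂μ0
        ≤ ∫ x, (A2 x + B2 x + A3 x + B3 x) ∂μ0 := by
      refine integral_mono_ae ((iu2.const_mul ε).add (iv2.const_mul ε))
        (((iA2.add iB2).add iA3).add iB3) ?_
      filter_upwards [hae₁, hae₂] with x h1 h2
      simp only [hA2, hB2, hA3, hB3]
      have hbx : (0:ℝ) ≤ ‖b x‖ := norm_nonneg _
      have hcx : (0:ℝ) ≤ ‖c x‖ := norm_nonneg _
      have hux : (0:ℝ) ≤ ‖u x‖ := norm_nonneg _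
      have hvx : (0:ℝ) ≤ ‖v x‖ := norm_nonneg _
      have y1 : 2 * ‖b x‖ * ‖u x‖ * ‖v x‖
          ≤ ‖b x‖ ^ (2*p) * ‖u x‖^2 + ‖b x‖ ^ (2*(1-p)) * ‖v x‖^2 :=
        young_rpow hbx hux hvx p
      have y2 : 2 * ‖c x‖ * ‖u x‖ * ‖v x‖
          ≤ ‖c x‖ ^ (2*q) * ‖u x‖^2 + ‖c x‖ ^ (2*(1-q)) * ‖v x‖^2 :=
        young_rpow hcx hux hvx q
      have r3 : -(‖b x‖ * ‖v x‖ * ‖u x‖) ≤ (b x * v x * (starRingEnd ℂ) (u x)).re := by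
        have h5 := neg_norm_le_re (b x * v x * (starRingEnd ℂ) (u x))
        rw [norm_mul, norm_mul, RCLike.norm_conj] at h5
        exact h5
      have r4 : -(‖c x‖ * ‖u x‖ * ‖v x‖) ≤ (c x * u x * (starRingEnd ℂ) (v x)).re := by
        have h5 := neg_norm_le_re (c x * u x * (starRingEnd ℂ) (v x))
        rw [norm_mul, norm_mul, RCLike.norm_conj] at h5
        exact h5
      have e1 : (ε + ‖b x‖ ^ (2*p) + ‖c x‖ ^ (2*q)) * ‖u x‖^2
          ≤ 2 * (a x).re * ‖u x‖^2 :=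
        mul_le_mul_of_nonneg_right (by linarith) (sq_nonneg _)
      have e2 : (ε + ‖b x‖ ^ (2*(1-p)) + ‖c x‖ ^ (2*(1-q))) * ‖v x‖^2
          ≤ 2 * (d x).re * ‖v x‖^2 :=
        mul_le_mul_of_nonneg_right (by linarith) (sq_nonneg _)
      nlinarith [y1, y2, r3, r4, e1, e2]
    have i1 : Integrable (fun x => A2 x + B2 x) μ0 := iA2.add iB2
    have i2 : Integrable (fun x => A2 x + B2 x + A3 x) μ0 := i1.add iA3
    rw [integral_add (iu2.const_mul ε) (iv2.const_mul ε)] at hmono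
    rw [integral_add i2 iB3, integral_add i1 iA3, integral_add iA2 iB2] at hmono
    rw [integral_const_mul, integral_const_mul] at hmono
    linarith
  -- pointwise upper bound
  have hup : (∫ x, A1 x ∂μ0) + ∫ x, B1 x ∂μ0
      ≤ 2/ε * ((∫ x, ‖fk x‖^2 ∂μ0) + ∫ x, ‖gk x‖^2 ∂μ0)
        + ε/2 * ((∫ x, ‖u x‖^2 ∂μ0) + ∫ x, ‖v x‖^2 ∂μ0) := by
    have hmono : ∫ x, (A1 x + B1 x) ∂μ0
        ≤ ∫ x, (2/ε * ‖fk x‖^2 + ε/2 * ‖u x‖^2 + (2/ε * ‖gk x‖^2 + ε/2 * ‖v x‖^2)) ∂μ0 := by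
      refine integral_mono_ae (iA1.add iB1)
        (((if2.const_mul _).add (iu2.const_mul _)).add
          ((ig2.const_mul _).add (iv2.const_mul _)))
        ?_
      refine Filter.Eventually.of_forall fun x => ?_
      rw [hA1, hB1]
      have h1 : (fk x * (starRingEnd ℂ) (u x)).re ≤ ‖fk x‖ * ‖u x‖ := by
        have h2 := _root_.re_le_norm (fk x * (starRingEnd ℂ) (u x))
        rw [norm_mul, RCLike.norm_conj] at h2
        exact h2
      have h3 : (gk x * (starRingEnd ℂ) (v x)).re ≤ ‖gk x‖ * ‖v x‖ := by
        have h4 := _root_.re_le_norm (gk x * (starRingEnd ℂ) (v x))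
        rw [norm_mul, RCLike.norm_conj] at h4
        exact h4
      have h5 := amgm_eps hε (‖fk x‖) (‖u x‖)
      have h6 := amgm_eps hε (‖gk x‖) (‖v x‖)
      linarith
    have j1 : Integrable (fun x => 2/ε * ‖fk x‖^2 + ε/2 * ‖u x‖^2) μ0 :=
      (if2.const_mul _).add (iu2.const_mul _)
    have j2 : Integrable (fun x => 2/ε * ‖gk x‖^2 + ε/2 * ‖v x‖^2) μ0 :=
      (ig2.const_mul _).add (iv2.const_mul _)
    rw [integral_add iA1 iB1] at hmono
    rw [integral_add j1 j2, integral_add (if2.const_mul _) (iu2.const_mul _),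
      integral_add (ig2.const_mul _) (iv2.const_mul _),
      integral_const_mul, integral_const_mul, integral_const_mul, integral_const_mul] at hmono
    rw [integral_const_mul, integral_const_mul] at hmono
    simp only [hA1, hB1]
    rw [integral_const_mul, integral_const_mul]
    linarith
  -- conclude
  have hXu : 0 ≤ ∫ x, ‖u x‖^2 ∂μ0 := integral_nonneg fun x => sq_nonneg _
  have hXv : 0 ≤ ∫ x, ‖v x‖^2 ∂μ0 := integral_nonneg fun x => sq_nonneg _
  have hY : 0 ≤ (∫ x, ‖fk x‖^2 ∂μ0) + ∫ x, ‖gk x‖^2 ∂μ0 := by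
    have := integral_nonneg (μ := μ0) (f := fun x => ‖fk x‖^2) fun x => sq_nonneg _
    have := integral_nonneg (μ := μ0) (f := fun x => ‖gk x‖^2) fun x => sq_nonneg _
    linarith
  set X : ℝ := (∫ x, ‖u x‖^2 ∂μ0) + ∫ x, ‖v x‖^2 ∂μ0 with hX
  set Y : ℝ := (∫ x, ‖fk x‖^2 ∂μ0) + ∫ x, ‖gk x‖^2 ∂μ0 with hY2
  have h5 : ε/2 * X ≤ 2/ε * Y := by
    rw [hX, hY2]
    linarith
  calc X = 2/ε * (ε/2 * X) := by field_simp
    _ ≤ 2/ε * (2/ε * Y) := mul_le_mul_of_nonneg_left h5 (by positivity)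
    _ = 4/ε^2 * Y := by field_simp; ring
end

section
/- Let ω > 0, a, d ∈ L^∞(0,1), and r₀, r₁ ∈ ℂ with |r₀r₁| ≠ exp(∫₀¹(Re a + Re d)). Fix k ∈ ℤ and f_k, g_k ∈ L²(0,1). Then the boundary value problem u_k′ + (a + ikω) u_k = f_k, v_k′ − (d + ikω) v_k = −g_k, u_k(0) = r₀ v_k(0), v_k(1) = r₁ u_k(1) has exactly one solution (u_k, v_k) ∈ H¹(0,1)². -/
open MeasureTheory Complex Filter Nat

lemma primitive_bound (g : ℝ → ℂ) (hg : Integrable g) (t : ℝ) :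
    ‖∫ s in (0:ℝ)..t, g s‖ ≤ ∫ s, ‖g s‖ := by
  refine le_trans (intervalIntegral.norm_integral_le_integral_norm_uIoc) ?_
  exact setIntegral_le_integral hg.norm (Eventually.of_forall fun s => norm_nonneg _)

lemma prim_eq_max (f : ℝ → ℂ) (x : ℝ) :
    (∫ t in Set.Ioc 0 x, f t) = ∫ t in (0:ℝ)..(max 0 x), f t := by
  rcases le_or_gt 0 x with h | h
  · rw [max_eq_right h, intervalIntegral.integral_of_le h]
  · rw [max_eq_left h.le, intervalIntegral.integral_same, Set.Ioc_eq_empty (by linarith)]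
    simp

lemma prim_cont (f : ℝ → ℂ) (hf : Integrable f) :
    Continuous fun x => ∫ t in Set.Ioc 0 x, f t := by
  have : (fun x => ∫ t in Set.Ioc 0 x, f t)
      = (fun y => ∫ t in (0:ℝ)..y, f t) ∘ (fun x => max 0 x) := funext fun x => prim_eq_max f x
  rw [this]
  exact (hf.continuous_primitive 0).comp (continuous_const.max continuous_id)

lemma prim_norm_le (f : ℝ → ℂ) (hf : Integrable f) (x : ℝ) :
    ‖∫ t in Set.Ioc 0 x, f t‖ ≤ ∫ t, ‖f t‖ := by
  rw [prim_eq_max]; exact primitive_bound f hf _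

lemma norm_exp_le (z : ℂ) (C : ℝ) (hz : ‖z‖ ≤ C) : ‖Complex.exp z‖ ≤ Real.exp C := by
  rw [Complex.norm_exp]
  exact Real.exp_le_exp.mpr (le_trans (Complex.re_le_norm z) hz)

lemma int_mul_bdd (p h : ℝ → ℂ) (hp : Integrable p) (hh : AEStronglyMeasurable h volume)
    (C : ℝ) (hC : ∀ t, ‖h t‖ ≤ C) (ν : Measure ℝ) (hle : ν ≤ volume) :
    Integrable (fun t => p t * h t) ν := by
  have : Integrable (fun t => h t * p t) volume := hp.bdd_mul hh (Eventually.of_forall hC)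
  exact ((this.congr (Eventually.of_forall fun t => mul_comm _ _)).mono_measure hle)

lemma linfty_bound_s13 (h : ℝ → ℂ) (μ : Measure ℝ) (hm : MemLp h ⊤ μ) :
    ∃ C : ℝ, 0 ≤ C ∧ ∀ᵐ x ∂μ, ‖h x‖ ≤ C := by
  refine ⟨(eLpNormEssSup h μ).toReal, ENNReal.toReal_nonneg, ?_⟩
  have h2 : eLpNormEssSup h μ ≠ ⊤ := by
    have := hm.2
    rwa [eLpNorm_exponent_top, lt_top_iff_ne_top] at this
  filter_upwards [ae_le_eLpNormEssSup (f := h) (μ := μ)] with x hx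
  have := ENNReal.toReal_mono h2 hx
  simpa using this

lemma ae_Ioc_of_ae_mu0 {P : ℝ → Prop} (h : ∀ᵐ t ∂μ0, P t) {x : ℝ} (hx : x ≤ 1) :
    ∀ᵐ t ∂(volume.restrict (Set.Ioc 0 x)), P t := by
  rw [ae_iff] at h ⊢
  have hμ : μ0 = volume.restrict (Set.Ioo 0 1) := rfl
  rw [hμ, Measure.restrict_apply' measurableSet_Ioo] at h
  rw [Measure.restrict_apply' measurableSet_Ioc]
  refine measure_mono_null (fun t ht => ?_) (measure_union_null h (measure_singleton x))
  rcases ht with ⟨ht1, ht2⟩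
  by_cases hte : t = x
  · exact Or.inr hte
  · exact Or.inl ⟨ht1, ht2.1, lt_of_lt_of_le (lt_of_le_of_ne ht2.2 hte) hx⟩

lemma core_fubini (f g : ℝ → ℂ) (hf : Integrable f) (hg : Integrable g) (x : ℝ) :
    (∫ t in Set.Ioc 0 x, f t * ∫ s in Set.Ioc 0 t, g s) +
      (∫ t in Set.Ioc 0 x, (∫ s in Set.Ioc 0 t, f s) * g t) =
    (∫ t in Set.Ioc 0 x, f t) * (∫ t in Set.Ioc 0 x, g t) := by
  set ν : Measure ℝ := volume.restrict (Set.Ioc 0 x) with hν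
  have hinter : ∀ t ∈ Set.Ioc (0:ℝ) x, Set.Iic t ∩ Set.Ioc 0 x = Set.Ioc 0 t := by
    intro t ht
    ext s
    simp only [Set.mem_inter_iff, Set.mem_Iic, Set.mem_Ioc]
    exact ⟨fun ⟨h1, h2, h3⟩ => ⟨h2, h1⟩, fun ⟨h1, h2⟩ => ⟨h2, h1, h2.trans ht.2⟩⟩
  have hgin : ∀ t ∈ Set.Ioc (0:ℝ) x, (∫ s in Set.Ioc 0 t, g s) = ∫ s, (Set.Iic t).indicator g s ∂ν := by
    intro t ht
    rw [integral_indicator measurableSet_Iic, hν, Measure.restrict_restrict measurableSet_Iic,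
      hinter t ht]
  have hfin : ∀ t ∈ Set.Ioc (0:ℝ) x, (∫ s in Set.Ioc 0 t, f s) = ∫ s, (Set.Iic t).indicator f s ∂ν := by
    intro t ht
    rw [integral_indicator measurableSet_Iic, hν, Measure.restrict_restrict measurableSet_Iic,
      hinter t ht]
  set S : Set (ℝ × ℝ) := {q | q.2 ≤ q.1} with hS
  set T : Set (ℝ × ℝ) := {q | q.1 ≤ q.2} with hT
  have hSm : MeasurableSet S := measurableSet_le measurable_snd measurable_fst
  have hTm : MeasurableSet T := measurableSet_le measurable_fst measurable_snd
  set h : ℝ × ℝ → ℂ := fun q => f q.1 * g q.2 with hh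
  have hint : Integrable h (ν.prod ν) := (hf.restrict).mul_prod (hg.restrict)
  have hintS : Integrable (S.indicator h) (ν.prod ν) := hint.indicator hSm
  have hintT : Integrable (T.indicator h) (ν.prod ν) := hint.indicator hTm
  -- term 1
  have hterm1 : (∫ t in Set.Ioc 0 x, f t * ∫ s in Set.Ioc 0 t, g s)
      = ∫ q, S.indicator h q ∂ν.prod ν := by
    have e1 : (∫ t in Set.Ioc 0 x, f t * ∫ s in Set.Ioc 0 t, g s)
        = ∫ t, ∫ s, S.indicator h (t, s) ∂ν ∂ν := by
      refine setIntegral_congr_fun measurableSet_Ioc (fun t ht => ?_)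
      rw [hgin t ht, ← integral_const_mul]
      refine integral_congr_ae (Eventually.of_forall fun s => ?_)
      simp only [hh, hS, Set.indicator_apply, Set.mem_Iic, Set.mem_setOf_eq, mul_ite, mul_zero]
    rw [e1]
    exact MeasureTheory.integral_integral
      (f := fun t s => S.indicator h (t, s)) (hintS.congr (Eventually.of_forall fun q => rfl))
  -- term 2
  have huncur : ∀ q : ℝ × ℝ, Function.uncurry (fun t s => (Set.Iic t).indicator f s * g t) q
      = S.indicator (fun q : ℝ × ℝ => f q.2 * g q.1) q := by
    intro q
    simp only [Function.uncurry, Set.indicator_apply, Set.mem_Iic, hS, Set.mem_setOf_eq,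
      ite_mul, zero_mul]
  have hswap : Integrable (Function.uncurry fun t s => (Set.Iic t).indicator f s * g t)
      (ν.prod ν) := by
    refine (Integrable.indicator ?_ hSm).congr (Eventually.of_forall fun q => (huncur q).symm)
    have := (hg.restrict (s := Set.Ioc 0 x)).mul_prod (hf.restrict (s := Set.Ioc 0 x))
    exact this.congr (Eventually.of_forall fun q => mul_comm _ _)
  have hterm2 : (∫ t in Set.Ioc 0 x, (∫ s in Set.Ioc 0 t, f s) * g t)
      = ∫ q, T.indicator h q ∂ν.prod ν := by
    have e1 : (∫ t in Set.Ioc 0 x, (∫ s in Set.Ioc 0 t, f s) * g t)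
        = ∫ t, ∫ s, (Set.Iic t).indicator f s * g t ∂ν ∂ν := by
      refine setIntegral_congr_fun measurableSet_Ioc (fun t ht => ?_)
      rw [hfin t ht, ← integral_mul_const]
    rw [e1, MeasureTheory.integral_integral_swap hswap]
    have hG : Integrable (Function.uncurry fun s t => (Set.Iic t).indicator f s * g t)
        (ν.prod ν) := by
      refine hintT.congr (Eventually.of_forall fun q => ?_)
      simp only [hh, hT, Function.uncurry, Set.indicator_apply, Set.mem_Iic, Set.mem_setOf_eq,
        ite_mul, zero_mul]
    rw [MeasureTheory.integral_integral hG]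
    refine integral_congr_ae (Eventually.of_forall fun q => ?_)
    simp only [hh, hT, Set.indicator_apply, Set.mem_Iic, Set.mem_setOf_eq, ite_mul, zero_mul]
  -- diagonal is null
  have hdiag : (ν.prod ν) {q : ℝ × ℝ | q.1 = q.2} = 0 := by
    rw [Measure.prod_apply (measurableSet_eq_fun measurable_fst measurable_snd)]
    have hpre : ∀ t : ℝ, (Prod.mk t ⁻¹' {q : ℝ × ℝ | q.1 = q.2}) = {t} := by
      intro t; ext s; simp [eq_comm]
    simp only [hpre]
    have hz : ∀ t : ℝ, ν ({t} : Set ℝ) = 0 := by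
      intro t
      rw [hν, Measure.restrict_apply' measurableSet_Ioc]
      exact measure_mono_null Set.inter_subset_left (measure_singleton t)
    simp [hz]
  rw [hterm1, hterm2, ← integral_add hintS hintT]
  have hae : ∀ᵐ q ∂ν.prod ν, S.indicator h q + T.indicator h q = h q := by
    rw [ae_iff]
    refine measure_mono_null (fun q hq => ?_) hdiag
    simp only [Set.mem_setOf_eq] at hq ⊢
    by_contra hne
    rcases lt_or_gt_of_ne hne with h1 | h1
    · refine hq ?_
      simp only [hS, hT, Set.indicator_apply, Set.mem_setOf_eq, if_neg (not_le.mpr h1),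
        if_pos h1.le, zero_add]
    · refine hq ?_
      simp only [hS, hT, Set.indicator_apply, Set.mem_setOf_eq, if_pos h1.le,
        if_neg (not_le.mpr h1), add_zero]
  rw [integral_congr_ae hae, hh, MeasureTheory.integral_prod_mul]


lemma prodAC (f g F G : ℝ → ℂ) (hf : Integrable f) (hg : Integrable g)
    (hF : ∀ y ∈ Set.Icc (0:ℝ) 1, F y = F 0 + ∫ t in Set.Ioc 0 y, f t)
    (hG : ∀ y ∈ Set.Icc (0:ℝ) 1, G y = G 0 + ∫ t in Set.Ioc 0 y, g t)
    {x : ℝ} (hx : x ∈ Set.Icc (0:ℝ) 1) :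
    F x * G x = F 0 * G 0 + ∫ t in Set.Ioc 0 x, (f t * G t + F t * g t) := by
  have hsub : Set.Ioc (0:ℝ) x ⊆ Set.Icc 0 1 := fun t ht => ⟨ht.1.le, ht.2.trans hx.2⟩
  set ν : Measure ℝ := volume.restrict (Set.Ioc 0 x) with hν
  set Pf : ℝ → ℂ := fun t => ∫ s in (0:ℝ)..t, f s with hPf
  set Pg : ℝ → ℂ := fun t => ∫ s in (0:ℝ)..t, g s with hPg
  have hPfc : Continuous Pf := hf.continuous_primitive 0
  have hPgc : Continuous Pg := hg.continuous_primitive 0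
  have hPfeq : ∀ t : ℝ, 0 ≤ t → Pf t = ∫ s in Set.Ioc 0 t, f s := fun t ht =>
    intervalIntegral.integral_of_le ht
  have hPgeq : ∀ t : ℝ, 0 ≤ t → Pg t = ∫ s in Set.Ioc 0 t, g s := fun t ht =>
    intervalIntegral.integral_of_le ht
  -- integrabilities
  have i1 : Integrable (fun t => f t * G 0) ν := (hf.restrict).mul_const _
  have i2 : Integrable (fun t => f t * Pg t) ν :=
    ((hf.restrict).bdd_mul hPgc.aestronglyMeasurable
      (Eventually.of_forall fun t => primitive_bound g hg t)).congr
      (Eventually.of_forall fun t => mul_comm _ _)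
  have i3 : Integrable (fun t => F 0 * g t) ν := (hg.restrict).const_mul _
  have i4 : Integrable (fun t => Pf t * g t) ν :=
    (hg.restrict).bdd_mul hPfc.aestronglyMeasurable (Eventually.of_forall fun t => primitive_bound f hf t)
  have e1 : ∫ t in Set.Ioc 0 x, (f t * G t + F t * g t)
      = ∫ t in Set.Ioc 0 x, ((f t * G 0 + f t * Pg t) + (F 0 * g t + Pf t * g t)) := by
    refine setIntegral_congr_fun measurableSet_Ioc fun t ht => ?_
    rw [hF t (hsub ht), hG t (hsub ht), ← hPfeq t ht.1.le, ← hPgeq t ht.1.le]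
    ring
  have e2 : ∫ t in Set.Ioc 0 x, ((f t * G 0 + f t * Pg t) + (F 0 * g t + Pf t * g t))
      = (∫ t in Set.Ioc 0 x, f t) * G 0 + (∫ t in Set.Ioc 0 x, f t * Pg t)
        + (F 0 * ∫ t in Set.Ioc 0 x, g t) + (∫ t in Set.Ioc 0 x, Pf t * g t) := by
    have a12 : Integrable (fun t => f t * G 0 + f t * Pg t) ν := i1.add i2
    have a34 : Integrable (fun t => F 0 * g t + Pf t * g t) ν := i3.add i4
    rw [integral_add a12 a34, integral_add i1 i2, integral_add i3 i4,
      integral_mul_const, integral_const_mul]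
    ring
  have hcore := core_fubini f g hf hg x
  have e3 : (∫ t in Set.Ioc 0 x, f t * Pg t) = ∫ t in Set.Ioc 0 x, f t * ∫ s in Set.Ioc 0 t, g s :=
    setIntegral_congr_fun measurableSet_Ioc fun t ht => by rw [hPgeq t ht.1.le]
  have e4 : (∫ t in Set.Ioc 0 x, Pf t * g t) = ∫ t in Set.Ioc 0 x, (∫ s in Set.Ioc 0 t, f s) * g t :=
    setIntegral_congr_fun measurableSet_Ioc fun t ht => by rw [hPfeq t ht.1.le]
  rw [e1, e2, e3, e4, hF x hx, hG x hx]
  linear_combination -hcore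


lemma prim_zero (f : ℝ → ℂ) : (∫ t in Set.Ioc (0:ℝ) 0, f t) = 0 := by simp

lemma pow_id (p : ℝ → ℂ) (hp : Integrable p) (n : ℕ) :
    ∀ y ∈ Set.Icc (0:ℝ) 1,
      (∫ t in Set.Ioc 0 y, p t) ^ (n + 1)
        = ((n : ℂ) + 1) * ∫ t in Set.Ioc 0 y, p t * (∫ s in Set.Ioc 0 t, p s) ^ n := by
  induction n with
  | zero =>
    intro y _
    simp
  | succ n ih =>
    intro y hy
    set B : ℝ → ℂ := fun x => ∫ t in Set.Ioc 0 x, p t with hB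
    have hBc : Continuous B := prim_cont p hp
    have hBb : ∀ t, ‖B t‖ ≤ ∫ s, ‖p s‖ := prim_norm_le p hp
    have hBb' : ∀ t, ‖B t ^ n‖ ≤ (∫ s, ‖p s‖) ^ n := fun t => by
      rw [norm_pow]; exact pow_le_pow_left₀ (norm_nonneg _) (hBb t) n
    have hgint : Integrable (fun t => ((n : ℂ) + 1) * (p t * B t ^ n)) volume := by
      exact ((int_mul_bdd p (fun t => B t ^ n) hp (hBc.pow n).aestronglyMeasurable _ hBb'
        volume le_rfl).const_mul _)
    have hGid : ∀ y ∈ Set.Icc (0:ℝ) 1,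
        B y ^ (n + 1) = B 0 ^ (n + 1) + ∫ t in Set.Ioc 0 y, ((n : ℂ) + 1) * (p t * B t ^ n) := by
      intro y hy
      rw [integral_const_mul, ← ih y hy, hB]
      simp [prim_zero]
    have key := prodAC p (fun t => ((n : ℂ) + 1) * (p t * B t ^ n)) B (fun y => B y ^ (n + 1))
      hp hgint (fun y hy => by simp [hB]) hGid hy
    have hB0 : B 0 = 0 := prim_zero p
    rw [hB0] at key
    simp only [zero_mul, zero_pow, zero_add] at key
    have e : ∫ t in Set.Ioc 0 y, (p t * B t ^ (n + 1) + B t * (((n : ℂ) + 1) * (p t * B t ^ n)))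
        = ∫ t in Set.Ioc 0 y, ((n : ℂ) + 1 + 1) * (p t * B t ^ (n + 1)) := by
      refine setIntegral_congr_fun measurableSet_Ioc fun t _ => ?_
      ring
    have key2 : B y * B y ^ (n + 1) = ∫ t in Set.Ioc 0 y, ((n:ℂ) + 1 + 1) * (p t * B t ^ (n+1)) := by
      rw [← e]
      simpa using key
    calc B y ^ (n + 1 + 1) = B y * B y ^ (n + 1) := by ring
      _ = ((n:ℂ) + 1 + 1) * ∫ t in Set.Ioc 0 y, p t * B t ^ (n+1) := by
          rw [key2, integral_const_mul]
      _ = ((n + 1 : ℕ) + 1 : ℂ) * ∫ t in Set.Ioc 0 y, p t * B t ^ (n+1) := by push_cast; ring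


lemma exp_prim (p : ℝ → ℂ) (hp : Integrable p) :
    ∀ x ∈ Set.Icc (0:ℝ) 1,
      Complex.exp (∫ t in Set.Ioc 0 x, p t)
        = 1 + ∫ t in Set.Ioc 0 x, p t * Complex.exp (∫ s in Set.Ioc 0 t, p s) := by
  intro x hx
  set B : ℝ → ℂ := fun y => ∫ t in Set.Ioc 0 y, p t with hB
  have hBc : Continuous B := prim_cont p hp
  set M : ℝ := ∫ s, ‖p s‖ with hM
  have hM0 : 0 ≤ M := integral_nonneg fun s => norm_nonneg _
  have hBb : ∀ t, ‖B t‖ ≤ M := prim_norm_le p hp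
  have hexp : ∀ z : ℂ, Complex.exp z = ∑' n : ℕ, z ^ n / n ! := by
    intro z
    rw [Complex.exp_eq_exp_ℂ, NormedSpace.exp_eq_tsum_div]
  set ν : Measure ℝ := volume.restrict (Set.Ioc 0 x) with hν
  have hmeas : ∀ n : ℕ, AEStronglyMeasurable (fun t => p t * (B t ^ n / n !)) ν :=
    fun n => (hp.aestronglyMeasurable.restrict).mul
      (((hBc.pow n).div_const _).aestronglyMeasurable.restrict)
  have hL : (∫⁻ t, ‖p t‖₊ ∂ν) ≠ ⊤ := hp.restrict.2.ne
  have hptw : ∀ n : ℕ, ∀ t : ℝ, (‖p t * (B t ^ n / (n ! : ℂ))‖₊ : ENNReal)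
      ≤ ENNReal.ofReal (M ^ n / n !) * ‖p t‖₊ := by
    intro n t
    have hpow : ‖B t ^ n / (n ! : ℂ)‖ ≤ M ^ n / n ! := by
      rw [norm_div, norm_pow, Complex.norm_natCast]
      gcongr
      exact hBb t
    calc (‖p t * (B t ^ n / (n ! : ℂ))‖₊ : ENNReal)
        = ENNReal.ofReal (‖B t ^ n / (n ! : ℂ)‖ * ‖p t‖) := by
          rw [← enorm_eq_nnnorm, ← ofReal_norm, norm_mul, mul_comm]
      _ ≤ ENNReal.ofReal ((M ^ n / n !) * ‖p t‖) :=
          ENNReal.ofReal_le_ofReal (mul_le_mul_of_nonneg_right hpow (norm_nonneg _))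
      _ = ENNReal.ofReal (M ^ n / n !) * ‖p t‖₊ := by
          rw [ENNReal.ofReal_mul (by positivity), ofReal_norm, enorm_eq_nnnorm]
  have hbnd : ∀ n : ℕ, (∫⁻ t, ‖p t * (B t ^ n / (n ! : ℂ))‖₊ ∂ν)
      ≤ ENNReal.ofReal (M ^ n / n !) * ∫⁻ t, ‖p t‖₊ ∂ν := by
    intro n
    calc (∫⁻ t, ‖p t * (B t ^ n / (n ! : ℂ))‖₊ ∂ν)
        ≤ ∫⁻ t, ENNReal.ofReal (M ^ n / n !) * ‖p t‖₊ ∂ν := lintegral_mono fun t => hptw n t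
      _ = ENNReal.ofReal (M ^ n / n !) * ∫⁻ t, ‖p t‖₊ ∂ν :=
          lintegral_const_mul' _ _ ENNReal.ofReal_ne_top
  have hsum_ne : (∑' n : ℕ, ∫⁻ t, ‖p t * (B t ^ n / (n ! : ℂ))‖₊ ∂ν) ≠ ⊤ := by
    refine ne_of_lt (lt_of_le_of_lt (ENNReal.tsum_le_tsum hbnd) ?_)
    rw [ENNReal.tsum_mul_right]
    refine ENNReal.mul_lt_top ?_ hL.lt_top
    rw [← ENNReal.ofReal_tsum_of_nonneg (fun n => by positivity)
      (Real.summable_pow_div_factorial M)]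
    exact ENNReal.ofReal_lt_top
  have hswap : ∫ t, (∑' n : ℕ, p t * (B t ^ n / n !)) ∂ν
      = ∑' n : ℕ, ∫ t, p t * (B t ^ n / n !) ∂ν := integral_tsum hmeas hsum_ne
  have lhs_eq : (∫ t in Set.Ioc 0 x, p t * Complex.exp (∫ s in Set.Ioc 0 t, p s))
      = ∫ t, (∑' n : ℕ, p t * (B t ^ n / n !)) ∂ν := by
    refine integral_congr_ae (Eventually.of_forall fun t => ?_)
    have h1 : Complex.exp (∫ s in Set.Ioc 0 t, p s) = ∑' n : ℕ, B t ^ n / n ! := hexp (B t)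
    show p t * Complex.exp (∫ s in Set.Ioc 0 t, p s) = ∑' n : ℕ, p t * (B t ^ n / (n ! : ℂ))
    rw [h1, ← tsum_mul_left]
  have hterm : ∀ n : ℕ, (∫ t, p t * (B t ^ n / n !) ∂ν) = B x ^ (n+1) / ((n+1)! : ℂ) := by
    intro n
    have e1 : (∫ t, p t * (B t ^ n / n !) ∂ν) = (∫ t, p t * B t ^ n ∂ν) * ((n ! : ℂ))⁻¹ := by
      rw [← integral_mul_const]
      refine integral_congr_ae (Eventually.of_forall fun t => ?_)
      show p t * (B t ^ n / (n ! : ℂ)) = p t * B t ^ n * ((n ! : ℂ))⁻¹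
      rw [div_eq_mul_inv]; ring
    have hne : ((n : ℂ) + 1) ≠ 0 := Nat.cast_add_one_ne_zero n
    have e2 : (∫ t, p t * B t ^ n ∂ν) = B x ^ (n+1) / ((n:ℂ)+1) := by
      rw [eq_div_iff hne, mul_comm]
      exact (pow_id p hp n x hx).symm
    rw [e1, e2, Nat.factorial_succ]
    have hfne : ((n ! : ℂ)) ≠ 0 := by
      exact_mod_cast (Nat.cast_ne_zero (R := ℂ)).mpr (Nat.factorial_ne_zero n)
    push_cast
    field_simp
  have hsummable : Summable (fun n : ℕ => B x ^ n / (n ! : ℂ)) :=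
    NormedSpace.expSeries_div_summable (B x)
  have hshift : Complex.exp (B x) = 1 + ∑' n : ℕ, B x ^ (n+1) / ((n+1)! : ℂ) := by
    rw [hexp (B x), Summable.tsum_eq_zero_add hsummable]
    simp
  rw [lhs_eq, hswap, tsum_congr hterm, ← hshift]

/-- under `|r₀r₁| ≠ exp(∫₀¹(Re a + Re d))`, the decoupled Fourier-mode
boundary value problem has exactly one solution `(u_k, v_k) ∈ H¹(0,1)²`. -/
theorem stmt13 (ω : ℝ) (hω : 0 < ω) (a d : ℝ → ℂ)
    (ha : MemLp a ⊤ μ0) (hd : MemLp d ⊤ μ0) (r₀ r₁ : ℂ)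
    (hr : ‖r₀ * r₁‖ ≠ Real.exp (∫ x, ((a x).re + (d x).re) ∂μ0))
    (k : ℤ) (fk gk : ℝ → ℂ) (hf : MemLp fk 2 μ0) (hg : MemLp gk 2 μ0) :
    ∃ u u' v v' : ℝ → ℂ,
      (IsH1 u u' ∧ IsH1 v v' ∧
        (∀ᵐ x ∂μ0, u' x + (a x + ((k : ℝ) * ω : ℝ) * Complex.I) * u x = fk x) ∧
        (∀ᵐ x ∂μ0, v' x - (d x + ((k : ℝ) * ω : ℝ) * Complex.I) * v x = -gk x) ∧
        u 0 = r₀ * v 0 ∧ v 1 = r₁ * u 1) ∧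
      ∀ u₂ u₂' v₂ v₂' : ℝ → ℂ,
        (IsH1 u₂ u₂' ∧ IsH1 v₂ v₂' ∧
          (∀ᵐ x ∂μ0, u₂' x + (a x + ((k : ℝ) * ω : ℝ) * Complex.I) * u₂ x = fk x) ∧
          (∀ᵐ x ∂μ0, v₂' x - (d x + ((k : ℝ) * ω : ℝ) * Complex.I) * v₂ x = -gk x) ∧
          u₂ 0 = r₀ * v₂ 0 ∧ v₂ 1 = r₁ * u₂ 1) →
        ∀ x ∈ Set.Icc (0:ℝ) 1, u₂ x = u x ∧ v₂ x = v x := by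
  classical
  have hμ0 : μ0 = volume.restrict (Set.Ioo 0 1) := rfl
  haveI : IsFiniteMeasure μ0 := by
    constructor
    rw [hμ0, Measure.restrict_apply_univ]
    simp [Real.volume_Ioo]
  set K : ℂ := ((k : ℝ) * ω : ℝ) * Complex.I with hK
  have h1mem : (1:ℝ) ∈ Set.Icc (0:ℝ) 1 := ⟨zero_le_one, le_rfl⟩
  have hmem : ∀ᵐ t ∂μ0, t ∈ Set.Ioo (0:ℝ) 1 := ae_restrict_mem measurableSet_Ioo
  -- measurable representatives
  have hma := ha.aestronglyMeasurable
  have hmd := hd.aestronglyMeasurable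
  have hmf := hf.aestronglyMeasurable
  have hmg := hg.aestronglyMeasurable
  -- integrability over μ0
  have haI : Integrable a μ0 := memLp_one_iff_integrable.mp (ha.mono_exponent le_top)
  have hdI : Integrable d μ0 := memLp_one_iff_integrable.mp (hd.mono_exponent le_top)
  have hfI : Integrable fk μ0 := memLp_one_iff_integrable.mp (hf.mono_exponent one_le_two)
  have hgI : Integrable gk μ0 := memLp_one_iff_integrable.mp (hg.mono_exponent one_le_two)
  -- globalized kernels
  set p : ℝ → ℂ := (Set.Ioo (0:ℝ) 1).indicator (fun t => hma.mk a t + K) with hpdef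
  set q : ℝ → ℂ := (Set.Ioo (0:ℝ) 1).indicator (fun t => hmd.mk d t + K) with hqdef
  set f₀ : ℝ → ℂ := (Set.Ioo (0:ℝ) 1).indicator (hmf.mk fk) with hf₀def
  set g₀ : ℝ → ℂ := (Set.Ioo (0:ℝ) 1).indicator (hmg.mk gk) with hg₀def
  have hpI : Integrable p volume := by
    refine IntegrableOn.integrable_indicator ?_ measurableSet_Ioo
    exact ((haI.congr hma.ae_eq_mk).add (integrable_const K) : Integrable _ μ0)
  have hqI : Integrable q volume := by
    refine IntegrableOn.integrable_indicator ?_ measurableSet_Ioo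
    exact ((hdI.congr hmd.ae_eq_mk).add (integrable_const K) : Integrable _ μ0)
  have hf₀I : Integrable f₀ volume := by
    refine IntegrableOn.integrable_indicator ?_ measurableSet_Ioo
    exact ((hfI.congr hmf.ae_eq_mk) : Integrable _ μ0)
  have hg₀I : Integrable g₀ volume := by
    refine IntegrableOn.integrable_indicator ?_ measurableSet_Ioo
    exact ((hgI.congr hmg.ae_eq_mk) : Integrable _ μ0)
  -- a.e. identifications on (0,1)
  have hpae : ∀ᵐ t ∂μ0, p t = a t + K := by
    filter_upwards [hmem, hma.ae_eq_mk] with t ht h2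
    rw [hpdef, Set.indicator_of_mem ht, ← h2]
  have hqae : ∀ᵐ t ∂μ0, q t = d t + K := by
    filter_upwards [hmem, hmd.ae_eq_mk] with t ht h2
    rw [hqdef, Set.indicator_of_mem ht, ← h2]
  have hf₀ae : ∀ᵐ t ∂μ0, f₀ t = fk t := by
    filter_upwards [hmem, hmf.ae_eq_mk] with t ht h2
    rw [hf₀def, Set.indicator_of_mem ht, ← h2]
  have hg₀ae : ∀ᵐ t ∂μ0, g₀ t = gk t := by
    filter_upwards [hmem, hmg.ae_eq_mk] with t ht h2
    rw [hg₀def, Set.indicator_of_mem ht, ← h2]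
  -- primitives
  set A : ℝ → ℂ := fun y => ∫ t in Set.Ioc 0 y, p t with hAdef
  set D : ℝ → ℂ := fun y => ∫ t in Set.Ioc 0 y, q t with hDdef
  have hA0 : A 0 = 0 := by simp [hAdef]
  have hD0 : D 0 = 0 := by simp [hDdef]
  have hAc : Continuous A := prim_cont p hpI
  have hDc : Continuous D := prim_cont q hqI
  have hinvA : ∀ x : ℝ, Complex.exp (A x) * Complex.exp (-A x) = 1 := by
    intro x; rw [← Complex.exp_add]; simp
  have hinvD : ∀ x : ℝ, Complex.exp (D x) * Complex.exp (-D x) = 1 := by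
    intro x; rw [← Complex.exp_add]; simp
  -- the four exponential AC identities
  have hEA : ∀ y ∈ Set.Icc (0:ℝ) 1, Complex.exp (A y)
      = Complex.exp (A 0) + ∫ t in Set.Ioc 0 y, p t * Complex.exp (A t) := by
    intro y hy
    rw [hA0, Complex.exp_zero]
    exact exp_prim p hpI y hy
  have hED : ∀ y ∈ Set.Icc (0:ℝ) 1, Complex.exp (D y)
      = Complex.exp (D 0) + ∫ t in Set.Ioc 0 y, q t * Complex.exp (D t) := by
    intro y hy
    rw [hD0, Complex.exp_zero]
    exact exp_prim q hqI y hy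
  have hEAm : ∀ y ∈ Set.Icc (0:ℝ) 1, Complex.exp (-A y)
      = Complex.exp (-A 0) + ∫ t in Set.Ioc 0 y, -p t * Complex.exp (-A t) := by
    intro y hy
    have h := exp_prim (fun t => -p t) hpI.neg y hy
    have hneg : ∀ z : ℝ, (∫ t in Set.Ioc 0 z, -p t) = -A z := by
      intro z; rw [hAdef]; exact integral_neg _
    rw [hneg y] at h
    rw [hA0, neg_zero, Complex.exp_zero, h]
    congr 1
    refine setIntegral_congr_fun measurableSet_Ioc fun t _ => ?_
    rw [hneg t]
  have hEDm : ∀ y ∈ Set.Icc (0:ℝ) 1, Complex.exp (-D y)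
      = Complex.exp (-D 0) + ∫ t in Set.Ioc 0 y, -q t * Complex.exp (-D t) := by
    intro y hy
    have h := exp_prim (fun t => -q t) hqI.neg y hy
    have hneg : ∀ z : ℝ, (∫ t in Set.Ioc 0 z, -q t) = -D z := by
      intro z; rw [hDdef]; exact integral_neg _
    rw [hneg y] at h
    rw [hD0, neg_zero, Complex.exp_zero, h]
    congr 1
    refine setIntegral_congr_fun measurableSet_Ioc fun t _ => ?_
    rw [hneg t]
  -- boundedness of the exponentials
  have hEAb : ∀ t : ℝ, ‖Complex.exp (A t)‖ ≤ Real.exp (∫ s, ‖p s‖) :=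
    fun t => norm_exp_le _ _ (prim_norm_le p hpI t)
  have hEAmb : ∀ t : ℝ, ‖Complex.exp (-A t)‖ ≤ Real.exp (∫ s, ‖p s‖) :=
    fun t => norm_exp_le _ _ (by rw [norm_neg]; exact prim_norm_le p hpI t)
  have hEDb : ∀ t : ℝ, ‖Complex.exp (D t)‖ ≤ Real.exp (∫ s, ‖q s‖) :=
    fun t => norm_exp_le _ _ (prim_norm_le q hqI t)
  have hEDmb : ∀ t : ℝ, ‖Complex.exp (-D t)‖ ≤ Real.exp (∫ s, ‖q s‖) :=
    fun t => norm_exp_le _ _ (by rw [norm_neg]; exact prim_norm_le q hqI t)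
  have hEAcont : Continuous fun t => Complex.exp (A t) := Complex.continuous_exp.comp hAc
  have hEAmcont : Continuous fun t => Complex.exp (-A t) := Complex.continuous_exp.comp hAc.neg
  have hEDcont : Continuous fun t => Complex.exp (D t) := Complex.continuous_exp.comp hDc
  have hEDmcont : Continuous fun t => Complex.exp (-D t) := Complex.continuous_exp.comp hDc.neg
  -- integrable products
  have hEAf : Integrable (fun t => Complex.exp (A t) * f₀ t) volume :=
    hf₀I.bdd_mul hEAcont.aestronglyMeasurable (Eventually.of_forall hEAb)
  have hEDmg : Integrable (fun t => Complex.exp (-D t) * g₀ t) volume :=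
    hg₀I.bdd_mul hEDmcont.aestronglyMeasurable (Eventually.of_forall hEDmb)
  have hpEA : Integrable (fun t => p t * Complex.exp (A t)) volume :=
    int_mul_bdd p _ hpI hEAcont.aestronglyMeasurable _ hEAb volume le_rfl
  have hpEAm : Integrable (fun t => -p t * Complex.exp (-A t)) volume := by
    have := int_mul_bdd p _ hpI hEAmcont.aestronglyMeasurable _ hEAmb volume le_rfl
    exact (this.neg.congr (Eventually.of_forall fun t => by simp [neg_mul]))
  have hqED : Integrable (fun t => q t * Complex.exp (D t)) volume :=
    int_mul_bdd q _ hqI hEDcont.aestronglyMeasurable _ hEDb volume le_rfl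
  have hqEDm : Integrable (fun t => -q t * Complex.exp (-D t)) volume := by
    have := int_mul_bdd q _ hqI hEDmcont.aestronglyMeasurable _ hEDmb volume le_rfl
    exact (this.neg.congr (Eventually.of_forall fun t => by simp [neg_mul]))
  -- the primitive integrals appearing in the solution formula
  set PF : ℝ → ℂ := fun y => ∫ t in Set.Ioc 0 y, Complex.exp (A t) * f₀ t with hPFdef
  set PG : ℝ → ℂ := fun y => ∫ t in Set.Ioc 0 y, Complex.exp (-D t) * g₀ t with hPGdef
  have hPF0 : PF 0 = 0 := by simp [hPFdef]
  have hPG0 : PG 0 = 0 := by simp [hPGdef]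
  have hPFc : Continuous PF := prim_cont _ hEAf
  have hPGc : Continuous PG := prim_cont _ hEDmg
  -- the determinant κ
  obtain ⟨κ, hκdef⟩ : ∃ κ : ℂ, κ = Complex.exp (D 1) - r₀ * r₁ * Complex.exp (-A 1) := ⟨_, rfl⟩
  have hADre : (A 1 + D 1).re = ∫ x, ((a x).re + (d x).re) ∂μ0 := by
    have h1 : A 1 + D 1 = ∫ t in Set.Ioc (0:ℝ) 1, (p t + q t) :=
      (integral_add hpI.integrableOn hqI.integrableOn).symm
    have h2 := integral_re (μ := volume.restrict (Set.Ioc (0:ℝ) 1))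
      (f := fun t => p t + q t) (hpI.integrableOn.add hqI.integrableOn)
    simp only [RCLike.re_to_complex] at h2
    rw [h1, ← h2, integral_Ioc_eq_integral_Ioo]
    refine integral_congr_ae ?_
    filter_upwards [hpae, hqae] with t h3 h4
    rw [h3, h4]
    simp [hK, Complex.add_re]
  have hκ : κ ≠ 0 := by
    intro h0
    apply hr
    have h1 : Complex.exp (D 1) = r₀ * r₁ * Complex.exp (-A 1) :=
      sub_eq_zero.mp (hκdef ▸ h0)
    have h2 : r₀ * r₁ = Complex.exp (A 1 + D 1) := by
      rw [Complex.exp_add]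
      calc r₀ * r₁ = r₀ * r₁ * (Complex.exp (A 1) * Complex.exp (-A 1)) := by
            rw [hinvA 1, mul_one]
        _ = Complex.exp (A 1) * (r₀ * r₁ * Complex.exp (-A 1)) := by ring
        _ = Complex.exp (A 1) * Complex.exp (D 1) := by rw [← h1]
    rw [h2, Complex.norm_exp, hADre]
  -- the solution
  obtain ⟨c, hcdef⟩ : ∃ c : ℂ,
      c = (Complex.exp (D 1) * PG 1 + r₁ * Complex.exp (-A 1) * PF 1) / κ := ⟨_, rfl⟩
  have hc : c * κ = Complex.exp (D 1) * PG 1 + r₁ * Complex.exp (-A 1) * PF 1 := by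
    rw [hcdef]; exact div_mul_cancel₀ _ hκ
  set u : ℝ → ℂ := fun x => Complex.exp (-A x) * (r₀ * c + PF x) with hudef
  set v : ℝ → ℂ := fun x => Complex.exp (D x) * (c - PG x) with hvdef
  set u' : ℝ → ℂ := fun x => fk x - (a x + K) * u x with hu'def
  set v' : ℝ → ℂ := fun x => (d x + K) * v x - gk x with hv'def
  have hu0 : u 0 = r₀ * c := by rw [hudef]; simp [hA0, hPF0]
  have hv0 : v 0 = c := by rw [hvdef]; simp [hD0, hPG0]
  have hEAu : ∀ x : ℝ, Complex.exp (A x) * u x = r₀ * c + PF x := by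
    intro x
    rw [hudef]
    simp only []
    rw [← mul_assoc, hinvA x, one_mul]
  have hEDv : ∀ x : ℝ, Complex.exp (-D x) * v x = c - PG x := by
    intro x
    rw [hvdef]
    simp only []
    rw [← mul_assoc, mul_comm (Complex.exp (-D x)) (Complex.exp (D x)), hinvD x, one_mul]

  -- representation of u:  u x = u 0 + ∫ (f₀ - p u)
  have hurep : ∀ x ∈ Set.Icc (0:ℝ) 1,
      u x = u 0 + ∫ t in Set.Ioc 0 x, (f₀ t - p t * u t) := by
    intro x hx
    have hGd : ∀ y ∈ Set.Icc (0:ℝ) 1, (r₀ * c + PF y)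
        = (r₀ * c + PF 0) + ∫ t in Set.Ioc 0 y, Complex.exp (A t) * f₀ t := by
      intro y hy
      rw [hPF0, add_zero, hPFdef]
    have key := prodAC (fun t => -p t * Complex.exp (-A t)) (fun t => Complex.exp (A t) * f₀ t)
      (fun y => Complex.exp (-A y)) (fun y => r₀ * c + PF y) hpEAm hEAf hEAm hGd hx
    have hhead : Complex.exp (-A 0) * (r₀ * c + PF 0) = u 0 := by
      rw [hu0, hA0, hPF0]; simp
    have hux : u x = Complex.exp (-A x) * (r₀ * c + PF x) := by rw [hudef]
    rw [hux, key, hhead]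
    congr 1
    refine setIntegral_congr_fun measurableSet_Ioc fun t _ => ?_
    have hut : u t = Complex.exp (-A t) * (r₀ * c + PF t) := by rw [hudef]
    linear_combination (f₀ t) * (hinvA t) + (p t) * hut
  -- representation of v:  v x = v 0 + ∫ (q v - g₀)
  have hvrep : ∀ x ∈ Set.Icc (0:ℝ) 1,
      v x = v 0 + ∫ t in Set.Ioc 0 x, (q t * v t - g₀ t) := by
    intro x hx
    have hGd : ∀ y ∈ Set.Icc (0:ℝ) 1, (c - PG y)
        = (c - PG 0) + ∫ t in Set.Ioc 0 y, -(Complex.exp (-D t) * g₀ t) := by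
      intro y hy
      rw [hPG0, sub_zero, integral_neg, hPGdef]
      ring
    have hgneg : Integrable (fun t => -(Complex.exp (-D t) * g₀ t)) volume :=
      hEDmg.neg.congr (Eventually.of_forall fun t => by simp)
    have key := prodAC (fun t => q t * Complex.exp (D t)) (fun t => -(Complex.exp (-D t) * g₀ t))
      (fun y => Complex.exp (D y)) (fun y => c - PG y) hqED hgneg hED hGd hx
    have hhead : Complex.exp (D 0) * (c - PG 0) = v 0 := by
      rw [hv0, hD0, hPG0]; simp
    have hvx : v x = Complex.exp (D x) * (c - PG x) := by rw [hvdef]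
    rw [hvx, key, hhead]
    congr 1
    refine setIntegral_congr_fun measurableSet_Ioc fun t _ => ?_
    have hvt : v t = Complex.exp (D t) * (c - PG t) := by rw [hvdef]
    linear_combination (-(q t)) * hvt + (-(g₀ t)) * (hinvD t)
  -- interval integrals of u', v'
  have hu'int : ∀ x ∈ Set.Icc (0:ℝ) 1,
      (∫ t in (0:ℝ)..x, u' t) = ∫ t in Set.Ioc 0 x, (f₀ t - p t * u t) := by
    intro x hx
    rw [intervalIntegral.integral_of_le hx.1]
    refine integral_congr_ae (ae_Ioc_of_ae_mu0 ?_ hx.2)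
    filter_upwards [hpae, hf₀ae] with t h1 h2
    rw [hu'def]
    simp only []
    rw [h1, h2]
  have hv'int : ∀ x ∈ Set.Icc (0:ℝ) 1,
      (∫ t in (0:ℝ)..x, v' t) = ∫ t in Set.Ioc 0 x, (q t * v t - g₀ t) := by
    intro x hx
    rw [intervalIntegral.integral_of_le hx.1]
    refine integral_congr_ae (ae_Ioc_of_ae_mu0 ?_ hx.2)
    filter_upwards [hqae, hg₀ae] with t h1 h2
    rw [hv'def]
    simp only []
    rw [h1, h2]
  have hu_H1b : ∀ x ∈ Set.Icc (0:ℝ) 1, u x = u 0 + ∫ t in (0:ℝ)..x, u' t := by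
    intro x hx
    rw [hu'int x hx]
    exact hurep x hx
  have hv_H1b : ∀ x ∈ Set.Icc (0:ℝ) 1, v x = v 0 + ∫ t in (0:ℝ)..x, v' t := by
    intro x hx
    rw [hv'int x hx]
    exact hvrep x hx
  -- L² membership of u', v'
  have hucont : Continuous u := by
    rw [hudef]; exact hEAmcont.mul (continuous_const.add hPFc)
  have hvcont : Continuous v := by
    rw [hvdef]; exact hEDcont.mul (continuous_const.sub hPGc)
  obtain ⟨Cu, hCu⟩ :=
    (isCompact_Icc (a := (0:ℝ)) (b := 1)).exists_bound_of_continuousOn hucont.continuousOn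
  obtain ⟨Cv, hCv⟩ :=
    (isCompact_Icc (a := (0:ℝ)) (b := 1)).exists_bound_of_continuousOn hvcont.continuousOn
  obtain ⟨Ca, hCa0, hCa⟩ := linfty_bound_s13 a μ0 ha
  obtain ⟨Cd, hCd0, hCd⟩ := linfty_bound_s13 d μ0 hd
  have hprodu : MemLp (fun x => (a x + K) * u x) ⊤ μ0 := by
    refine memLp_top_of_bound ((hma.add aestronglyMeasurable_const).mul
      hucont.aestronglyMeasurable) ((Ca + ‖K‖) * Cu) ?_
    filter_upwards [hCa, hmem] with x h1 h2
    have h3 : ‖u x‖ ≤ Cu := hCu x ⟨h2.1.le, h2.2.le⟩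
    calc ‖(a x + K) * u x‖ = ‖a x + K‖ * ‖u x‖ := norm_mul _ _
      _ ≤ (Ca + ‖K‖) * Cu := mul_le_mul (le_trans (norm_add_le _ _) (add_le_add_left h1 _))
          h3 (norm_nonneg _) (add_nonneg hCa0 (norm_nonneg _))
  have hprodv : MemLp (fun x => (d x + K) * v x) ⊤ μ0 := by
    refine memLp_top_of_bound ((hmd.add aestronglyMeasurable_const).mul
      hvcont.aestronglyMeasurable) ((Cd + ‖K‖) * Cv) ?_
    filter_upwards [hCd, hmem] with x h1 h2
    have h3 : ‖v x‖ ≤ Cv := hCv x ⟨h2.1.le, h2.2.le⟩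
    calc ‖(d x + K) * v x‖ = ‖d x + K‖ * ‖v x‖ := norm_mul _ _
      _ ≤ (Cd + ‖K‖) * Cv := mul_le_mul (le_trans (norm_add_le _ _) (add_le_add_left h1 _))
          h3 (norm_nonneg _) (add_nonneg hCd0 (norm_nonneg _))
  have hu'L2 : MemLp u' 2 μ0 := hf.sub (hprodu.mono_exponent le_top)
  have hv'L2 : MemLp v' 2 μ0 := (hprodv.mono_exponent le_top).sub hg
  -- ODEs hold exactly
  have hodeu : ∀ᵐ x ∂μ0, u' x + (a x + K) * u x = fk x := by
    filter_upwards with x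
    rw [hu'def]
    simp only []
    ring
  have hodev : ∀ᵐ x ∂μ0, v' x - (d x + K) * v x = -gk x := by
    filter_upwards with x
    rw [hv'def]
    simp only []
    ring
  -- boundary condition at 1
  have hbdry : v 1 = r₁ * u 1 := by
    have h1 : u 1 = Complex.exp (-A 1) * (r₀ * c + PF 1) := by rw [hudef]
    have h2 : v 1 = Complex.exp (D 1) * (c - PG 1) := by rw [hvdef]
    rw [h1, h2]
    linear_combination hc - c * hκdef
  refine ⟨u, u', v, v', ⟨⟨hu'L2, hu_H1b⟩, ⟨hv'L2, hv_H1b⟩, hodeu, hodev,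
    by rw [hu0, hv0], hbdry⟩, ?_⟩
  -- Uniqueness
  rintro u₂ u₂' v₂ v₂' ⟨⟨hu₂L2, hu₂int⟩, ⟨hv₂L2, hv₂int⟩, hodeu₂, hodev₂, hb0₂, hb1₂⟩
  have hmu₂ := hu₂L2.aestronglyMeasurable
  have hmv₂ := hv₂L2.aestronglyMeasurable
  set g₂ : ℝ → ℂ := (Set.Ioo (0:ℝ) 1).indicator (hmu₂.mk u₂') with hg₂def
  set h₂ : ℝ → ℂ := (Set.Ioo (0:ℝ) 1).indicator (hmv₂.mk v₂') with hh₂def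
  have hu₂'I : Integrable u₂' μ0 :=
    memLp_one_iff_integrable.mp (hu₂L2.mono_exponent one_le_two)
  have hv₂'I : Integrable v₂' μ0 :=
    memLp_one_iff_integrable.mp (hv₂L2.mono_exponent one_le_two)
  have hg₂I : Integrable g₂ volume := by
    refine IntegrableOn.integrable_indicator ?_ measurableSet_Ioo
    exact ((hu₂'I.congr hmu₂.ae_eq_mk) : Integrable _ μ0)
  have hh₂I : Integrable h₂ volume := by
    refine IntegrableOn.integrable_indicator ?_ measurableSet_Ioo
    exact ((hv₂'I.congr hmv₂.ae_eq_mk) : Integrable _ μ0)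
  have hg₂ae : ∀ᵐ t ∂μ0, g₂ t = u₂' t := by
    filter_upwards [hmem, hmu₂.ae_eq_mk] with t h1 h2
    rw [hg₂def, Set.indicator_of_mem h1, ← h2]
  have hh₂ae : ∀ᵐ t ∂μ0, h₂ t = v₂' t := by
    filter_upwards [hmem, hmv₂.ae_eq_mk] with t h1 h2
    rw [hh₂def, Set.indicator_of_mem h1, ← h2]
  have hu₂rep : ∀ y ∈ Set.Icc (0:ℝ) 1, u₂ y = u₂ 0 + ∫ t in Set.Ioc 0 y, g₂ t := by
    intro y hy
    rw [hu₂int y hy]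
    congr 1
    rw [intervalIntegral.integral_of_le hy.1]
    exact integral_congr_ae ((ae_Ioc_of_ae_mu0 hg₂ae hy.2).mono fun t ht => ht.symm)
  have hv₂rep : ∀ y ∈ Set.Icc (0:ℝ) 1, v₂ y = v₂ 0 + ∫ t in Set.Ioc 0 y, h₂ t := by
    intro y hy
    rw [hv₂int y hy]
    congr 1
    rw [intervalIntegral.integral_of_le hy.1]
    exact integral_congr_ae ((ae_Ioc_of_ae_mu0 hh₂ae hy.2).mono fun t ht => ht.symm)
  have hu₂key : ∀ x ∈ Set.Icc (0:ℝ) 1, Complex.exp (A x) * u₂ x = u₂ 0 + PF x := by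
    intro x hx
    have key := prodAC (fun t => p t * Complex.exp (A t)) g₂ (fun y => Complex.exp (A y)) u₂
      hpEA hg₂I hEA hu₂rep hx
    have hint : ∫ t in Set.Ioc 0 x, (p t * Complex.exp (A t) * u₂ t + Complex.exp (A t) * g₂ t)
        = ∫ t in Set.Ioc 0 x, Complex.exp (A t) * f₀ t := by
      refine integral_congr_ae (ae_Ioc_of_ae_mu0 ?_ hx.2)
      filter_upwards [hg₂ae, hodeu₂, hpae, hf₀ae] with t h1 h2 h3 h4
      rw [h1]
      have h5 : u₂' t = fk t - (a t + K) * u₂ t := by linear_combination h2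
      rw [h5, ← h3, ← h4]
      ring
    have hPFx : PF x = ∫ t in Set.Ioc 0 x, Complex.exp (A t) * f₀ t := by rw [hPFdef]
    rw [key, hint, hA0, Complex.exp_zero, one_mul, hPFx]
  have hv₂key : ∀ x ∈ Set.Icc (0:ℝ) 1, Complex.exp (-D x) * v₂ x = v₂ 0 - PG x := by
    intro x hx
    have key := prodAC (fun t => -q t * Complex.exp (-D t)) h₂ (fun y => Complex.exp (-D y)) v₂
      hqEDm hh₂I hEDm hv₂rep hx
    have hint : ∫ t in Set.Ioc 0 x, (-q t * Complex.exp (-D t) * v₂ t + Complex.exp (-D t) * h₂ t)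
        = ∫ t in Set.Ioc 0 x, -(Complex.exp (-D t) * g₀ t) := by
      refine integral_congr_ae (ae_Ioc_of_ae_mu0 ?_ hx.2)
      filter_upwards [hh₂ae, hodev₂, hqae, hg₀ae] with t h1 h2 h3 h4
      rw [h1]
      have h5 : v₂' t = (d t + K) * v₂ t - gk t := by linear_combination h2
      rw [h5, ← h3, ← h4]
      ring
    have hPGx : PG x = ∫ t in Set.Ioc 0 x, Complex.exp (-D t) * g₀ t := by rw [hPGdef]
    rw [key, hint, integral_neg, hD0, neg_zero, Complex.exp_zero, one_mul, hPGx]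
    ring
  have hceq : v₂ 0 = c := by
    have h1 := hu₂key 1 h1mem
    have h2 := hv₂key 1 h1mem
    have e1 : u₂ 1 = Complex.exp (-A 1) * (u₂ 0 + PF 1) := by
      calc u₂ 1 = (Complex.exp (A 1) * Complex.exp (-A 1)) * u₂ 1 := by rw [hinvA 1, one_mul]
        _ = Complex.exp (-A 1) * (Complex.exp (A 1) * u₂ 1) := by ring
        _ = Complex.exp (-A 1) * (u₂ 0 + PF 1) := by rw [h1]
    have e2 : v₂ 1 = Complex.exp (D 1) * (v₂ 0 - PG 1) := by
      calc v₂ 1 = (Complex.exp (D 1) * Complex.exp (-D 1)) * v₂ 1 := by rw [hinvD 1, one_mul]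
        _ = Complex.exp (D 1) * (Complex.exp (-D 1) * v₂ 1) := by ring
        _ = Complex.exp (D 1) * (v₂ 0 - PG 1) := by rw [h2]
    have e3 : Complex.exp (D 1) * (v₂ 0 - PG 1) = r₁ * (Complex.exp (-A 1) * (u₂ 0 + PF 1)) := by
      rw [← e1, ← e2]
      exact hb1₂
    have e4 : κ * (v₂ 0 - c) = 0 := by
      linear_combination e3 - hc + (r₁ * Complex.exp (-A 1)) * hb0₂ + v₂ 0 * hκdef
    rcases mul_eq_zero.mp e4 with h | h
    · exact absurd h hκ
    · exact sub_eq_zero.mp h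
  intro x hx
  have hueq : u₂ x = u x := by
    have h3 : Complex.exp (A x) * u₂ x = Complex.exp (A x) * u x := by
      rw [hu₂key x hx, hEAu x, hb0₂, hceq]
    exact mul_left_cancel₀ (Complex.exp_ne_zero _) h3
  have hveq : v₂ x = v x := by
    have h3 : Complex.exp (-D x) * v₂ x = Complex.exp (-D x) * v x := by
      rw [hv₂key x hx, hEDv x, hceq]
    exact mul_left_cancel₀ (Complex.exp_ne_zero _) h3
  exact ⟨hueq, hveq⟩
end
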